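/- arXiv:1911.10765 — 8 statements merged into one kernel-verified Lean document; each statement's English description precedes it below -/
import Mathlib

section
/- Let M = (V, I) be a matroid, S ∈ I, b ∉ S, and A ⊆ S nonempty with S − A + b ∈ I. Then for any partition of A into nonempty parts A₁ and A₂, either S − A₁ + b ∈ I or S − A₂ + b ∈ I. -/
open Classical

noncomputable section

structure FinMatroid (α : Type*) where
  Indep : Finset α → Prop
  empty_indep : Indep ∅
  subset_indep : ∀ ⦃A B : Finset α⦄, Indep A → B ⊆ A → Indep B
  exchange : ∀ ⦃A B : Finset α⦄, Indep A → Indep B → A.card < B.card →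
    ∃ b ∈ B \ A, Indep (insert b A)

variable {α : Type*} [DecidableEq α]

/-- The rank of a set `T`: the maximum cardinality of an independent subset of `T`. -/
def FinMatroid.rank (M : FinMatroid α) (T : Finset α) : ℕ :=
  (T.powerset.filter fun A => M.Indep A).sup Finset.card

lemma FinMatroid.augment {β : Type*} (M : FinMatroid β) :
    ∀ n (B S : Finset β), S.card - B.card = n → M.Indep B → M.Indep S →
      B.card ≤ S.card → ∃ C, B ⊆ C ∧ C ⊆ B ∪ S ∧ M.Indep C ∧ C.card = S.card := by
  intro n
  induction n with
  | zero =>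
    intro B S h hB hS hle
    exact ⟨B, Finset.Subset.refl _, Finset.subset_union_left, hB, by omega⟩
  | succ n ih =>
    intro B S h hB hS hle
    have hlt : B.card < S.card := by omega
    obtain ⟨x, hx, hxi⟩ := M.exchange hB hS hlt
    have hxB : x ∉ B := (Finset.mem_sdiff.mp hx).2
    have hcard : (insert x B).card = B.card + 1 := Finset.card_insert_of_notMem hxB
    obtain ⟨C, h1, h2, h3, h4⟩ := ih (insert x B) S (by omega) hxi hS (by omega)
    refine ⟨C, (Finset.subset_insert _ _).trans h1, ?_, h3, h4⟩
    intro y hy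
    rcases Finset.mem_union.mp (h2 hy) with h | h
    · rcases Finset.mem_insert.mp h with rfl | h
      · exact Finset.mem_union_right _ (Finset.mem_sdiff.mp hx).1
      · exact Finset.mem_union_left _ h
    · exact Finset.mem_union_right _ h

/-- If `S` is independent, `b ∉ S`, `A ⊆ S` is nonempty and `S − A + b` is independent, then
for any partition of `A` into nonempty parts `A₁, A₂`, either `S − A₁ + b` or `S − A₂ + b`
is independent. -/
theorem findExchange_partition (M : FinMatroid α) (S A A₁ A₂ : Finset α) (b : α)
    (hS : M.Indep S) (hb : b ∉ S) (hA : A ⊆ S) (hAne : A.Nonempty)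
    (hind : M.Indep (insert b (S \ A)))
    (hpart : A₁ ∪ A₂ = A) (hdisj : Disjoint A₁ A₂)
    (h₁ : A₁.Nonempty) (h₂ : A₂.Nonempty) :
    M.Indep (insert b (S \ A₁)) ∨ M.Indep (insert b (S \ A₂)) := by
  set B := insert b (S \ A) with hBdef
  have hbSA : b ∉ S \ A := fun h => hb (Finset.mem_sdiff.mp h).1
  have hAcard : (S \ A).card = S.card - A.card := Finset.card_sdiff_of_subset hA
  have hAle : A.card ≤ S.card := Finset.card_le_card hA
  have hA2 : 2 ≤ A.card := by
    have := Finset.card_union_of_disjoint hdisj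
    rw [hpart] at this
    have c1 : 1 ≤ A₁.card := Finset.card_pos.mpr h₁
    have c2 : 1 ≤ A₂.card := Finset.card_pos.mpr h₂
    omega
  have hBcard : B.card = S.card - A.card + 1 := by
    rw [hBdef, Finset.card_insert_of_notMem hbSA, hAcard]
  have hBle : B.card ≤ S.card := by omega
  obtain ⟨C, h1, h2, h3, h4⟩ := M.augment (S.card - B.card) B S rfl hind hS hBle
  have hbC : b ∈ C := h1 (Finset.mem_insert_self _ _)
  set D := C.erase b with hDdef
  have hDS : D ⊆ S := by
    intro y hy
    have hyb : y ≠ b := Finset.ne_of_mem_erase hy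
    have := h2 (Finset.mem_of_mem_erase hy)
    simp only [Finset.mem_union] at this
    rcases this with h | h
    · rcases Finset.mem_insert.mp h with rfl | h
      · exact absurd rfl hyb
      · exact (Finset.mem_sdiff.mp h).1
    · exact h
  have hDcard : D.card = S.card - 1 := by
    rw [hDdef, Finset.card_erase_of_mem hbC, h4]
  have hScard1 : 1 ≤ S.card := le_trans (by omega) hAle
  have hsd : (S \ D).card = 1 := by
    rw [Finset.card_sdiff_of_subset hDS]; omega
  obtain ⟨a, ha⟩ := Finset.card_eq_one.mp hsd
  have haS : a ∈ S := (Finset.mem_sdiff.mp (ha ▸ Finset.mem_singleton_self a)).1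
  have haD : a ∉ D := (Finset.mem_sdiff.mp (ha ▸ Finset.mem_singleton_self a)).2
  have hSAD : S \ A ⊆ D := by
    intro y hy
    refine Finset.mem_erase.mpr ⟨?_, h1 (Finset.mem_insert_of_mem hy)⟩
    intro h; exact hbSA (h ▸ hy)
  have haA : a ∈ A := by
    by_contra h
    exact haD (hSAD (Finset.mem_sdiff.mpr ⟨haS, h⟩))
  have key : ∀ A' : Finset α, a ∈ A' → M.Indep (insert b (S \ A')) := by
    intro A' haA'
    refine M.subset_indep h3 ?_
    intro y hy
    rcases Finset.mem_insert.mp hy with rfl | hy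
    · exact hbC
    · have hyS := (Finset.mem_sdiff.mp hy).1
      have hyA' := (Finset.mem_sdiff.mp hy).2
      have hyD : y ∈ D := by
        by_contra hyD
        have : y ∈ S \ D := Finset.mem_sdiff.mpr ⟨hyS, hyD⟩
        rw [ha, Finset.mem_singleton] at this
        exact hyA' (this ▸ haA')
      exact Finset.mem_of_mem_erase hyD
  rw [← hpart] at haA
  rcases Finset.mem_union.mp haA with h | h
  · exact Or.inl (key A₁ h)
  · exact Or.inr (key A₂ h)
end
end

section
/- Let M = (V, I) be a matroid and S ∈ I. Suppose X ⊆ S and Y, Z ⊆ V \ S with Y ∩ Z = ∅ satisfy: (a) S + Z ∈ I, (b) S − X + Y ∈ I, and (c) rank(S + Y) = rank(S) = |S| (i.e., Y lies in the span of S). Then S + Z − X + Y ∈ I. -/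
open Classical

noncomputable section

variable {α : Type*} [DecidableEq α]

/-!
Extend `S − X + Y` greedily from `S + Z` to an independent set `B ⊆ S ∪ Y ∪ Z` with
`|B| ≥ |S| + |Z|`. The part of `B` outside `Z` lies in `S ∪ Y`, whose rank is `|S|`, so `B`
has at least `|Z|` elements in `Z`, i.e. `Z ⊆ B`. Hence `S + Z − X + Y ⊆ B` is independent.
-/

theorem Finset.subset_of_card_add_card_sdiff_le {s t : Finset α}
    (h : s.card + (t \ s).card ≤ t.card) : s ⊆ t := by
  have hinter : s.card ≤ (t ∩ s).card := by
    have := Finset.card_inter_add_card_sdiff t s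
    omega
  rw [← Finset.eq_of_subset_of_card_le Finset.inter_subset_right hinter]
  exact Finset.inter_subset_left

namespace FinMatroid

variable (M : FinMatroid α)

theorem exists_indep_superset_subset_union {A C : Finset α} (hA : M.Indep A) (hC : M.Indep C) :
    ∃ B, A ⊆ B ∧ B ⊆ A ∪ C ∧ M.Indep B ∧ C.card ≤ B.card := by
  set candidates := (A ∪ C).powerset.filter fun B => A ⊆ B ∧ M.Indep B
  have hA_mem : A ∈ candidates :=
    Finset.mem_filter.2 ⟨Finset.mem_powerset.2 Finset.subset_union_left, subset_rfl, hA⟩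
  obtain ⟨B, hB_mem, hB_max⟩ := candidates.exists_max_image Finset.card ⟨A, hA_mem⟩
  simp only [candidates, Finset.mem_filter, Finset.mem_powerset] at hB_mem hB_max
  obtain ⟨hB_sub, hAB, hB⟩ := hB_mem
  refine ⟨B, hAB, hB_sub, hB, not_lt.1 fun hlt => ?_⟩
  -- `exchange` is stated with classical decidable equality
  obtain ⟨b, hb, hbB⟩ : ∃ b ∈ C \ B, M.Indep (insert b B) := by convert M.exchange hB hC hlt
  obtain ⟨hbC, hb_notMem⟩ := Finset.mem_sdiff.1 hb
  have := hB_max (insert b B)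
    ⟨Finset.insert_subset (Finset.mem_union_right A hbC) hB_sub,
      hAB.trans (Finset.subset_insert b B), hbB⟩
  rw [Finset.card_insert_of_notMem hb_notMem] at this
  omega

theorem subset_of_rank_add_card_le {B T Z : Finset α} (hB : M.Indep B) (hBT : B ⊆ T ∪ Z)
    (hcard : M.rank T + Z.card ≤ B.card) : Z ⊆ B := by
  have hBZ_sub : B \ Z ⊆ T := by
    intro x hx
    have := hBT (Finset.sdiff_subset hx)
    grind
  have : (B \ Z).card ≤ M.rank T := Finset.le_sup <|
    Finset.mem_filter.2 ⟨Finset.mem_powerset.2 hBZ_sub, M.subset_indep hB Finset.sdiff_subset⟩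
  exact Finset.subset_of_card_add_card_sdiff_le (by omega)

end FinMatroid

theorem fact2_general (M : FinMatroid α) (S X Y Z : Finset α)
    (hZS : Disjoint Z S)
    (ha : M.Indep (S ∪ Z))
    (hb : M.Indep ((S \ X) ∪ Y))
    (hc : M.rank (S ∪ Y) = M.rank S ∧ M.rank S = S.card) :
    M.Indep (((S ∪ Z) \ X) ∪ Y) := by
  obtain ⟨B, hB_sup, hB_sub, hB, hcard⟩ := M.exists_indep_superset_subset_union hb ha
  have hZB : Z ⊆ B := by
    refine M.subset_of_rank_add_card_le hB (T := S ∪ Y) (hB_sub.trans ?_) ?_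
    · grind
    · rwa [hc.1, hc.2, ← Finset.card_union_of_disjoint hZS.symm]
  refine M.subset_indep hB fun x hx => ?_
  grind

/-- Fact 2: if `S + Z ∈ I`, `S − X + Y ∈ I` and `Y` lies in the span of `S`
(`rank (S + Y) = rank S = |S|`), with `X ⊆ S` and `Y, Z` disjoint subsets of the complement
of `S`, then `S + Z − X + Y ∈ I`. -/
theorem fact2 (M : FinMatroid α) (S X Y Z : Finset α)
    (hS : M.Indep S) (hX : X ⊆ S)
    (hYS : Disjoint Y S) (hZS : Disjoint Z S) (hYZ : Disjoint Y Z)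
    (ha : M.Indep (S ∪ Z))
    (hb : M.Indep ((S \ X) ∪ Y))
    (hc : M.rank (S ∪ Y) = M.rank S ∧ M.rank S = S.card) :
    M.Indep (((S ∪ Z) \ X) ∪ Y) :=
  fact2_general M S X Y Z hZS ha hb hc
end
end

section
/- Let S be a common independent set of matroids M₁ = (V, I₁) and M₂ = (V, I₂), let A ⊆ S and b ∉ S. If there is no a ∈ A such that S − a + b ∈ I₁ (i.e., no exchange-graph edge (a,b)), then S − A + b ∉ I₁. -/
open Classical

noncomputable section

variable {α : Type*} [DecidableEq α]

/-- Fact 1: if `S` is a common independent set, `A ⊆ S` is nonempty, `b ∉ S`, and there is no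
exchange-graph edge `(a, b)` with `a ∈ A` (i.e. no `a ∈ A` with `S − a + b ∈ I₁`),
then `S − A + b ∉ I₁`. -/
theorem fact1 (M₁ M₂ : FinMatroid α) (S A : Finset α) (b : α)
    (hS₁ : M₁.Indep S) (hS₂ : M₂.Indep S)
    (hA : A ⊆ S) (hAne : A.Nonempty) (hb : b ∉ S)
    (hno : ∀ a ∈ A, ¬ M₁.Indep (insert b (S.erase a))) :
    ¬ M₁.Indep (insert b (S \ A)) := by
  suffices h : ∀ B : Finset α, B ⊆ A → B.Nonempty → ¬ M₁.Indep (insert b (S \ B)) from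
    h A le_rfl hAne
  intro B
  induction B using Finset.strongInductionOn with
  | _ B ih =>
    intro hBA hBne hind
    obtain ⟨a, haB⟩ := hBne
    by_cases hsing : B = {a}
    · subst hsing
      exact hno a (hBA haB) (by rwa [Finset.sdiff_singleton_eq_erase] at hind)
    · have hBS : B ⊆ S := hBA.trans hA
      have h2 : 2 ≤ B.card := by
        rcases Finset.eq_singleton_or_nontrivial haB with h | h
        · exact absurd h hsing
        · exact Finset.one_lt_card.mpr h
      have hbnot : b ∉ S \ B := fun hx => hb (Finset.mem_sdiff.mp hx).1
      have hcard : (insert b (S \ B)).card < S.card := by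
        rw [Finset.card_insert_of_notMem hbnot, Finset.card_sdiff_of_subset hBS]
        have hBle : B.card ≤ S.card := Finset.card_le_card hBS
        omega
      obtain ⟨x, hx, hxind⟩ := M₁.exchange hind hS₁ hcard
      simp only [Finset.mem_sdiff] at hx
      obtain ⟨hxS, hxT⟩ := hx
      have hxb : x ≠ b := fun h => hxT (h ▸ Finset.mem_insert_self _ _)
      have hxB : x ∈ B := by
        by_contra hxB
        exact hxT (Finset.mem_insert_of_mem (Finset.mem_sdiff.mpr ⟨hxS, hxB⟩))
      have hxind' : M₁.Indep (insert b (S \ B.erase x)) := by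
        convert hxind using 1
        ext y
        simp only [Finset.mem_insert, Finset.mem_sdiff, Finset.mem_erase]
        constructor
        · rintro (rfl | ⟨hyS, hy⟩)
          · exact Or.inr (Or.inl rfl)
          · by_cases hyx : y = x
            · exact Or.inl hyx
            · exact Or.inr (Or.inr ⟨hyS, fun h => hy ⟨hyx, h⟩⟩)
        · rintro (rfl | rfl | ⟨hyS, hyB⟩)
          · exact Or.inr ⟨hxS, fun h => h.1 rfl⟩
          · exact Or.inl rfl
          · exact Or.inr ⟨hyS, fun h => hyB h.2⟩
      have herase_ne : (B.erase x).Nonempty := by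
        rw [← Finset.card_pos, Finset.card_erase_of_mem hxB]; omega
      exact ih (B.erase x) (Finset.erase_ssubset hxB)
        ((Finset.erase_subset _ _).trans hBA) herase_ne hxind'
end
end

section
/- Let M₁ = (V, I₁), M₂ = (V, I₂) be matroids whose largest common independent set has size r, and let S ∈ I₁ ∩ I₂ with |S| < r. Then the exchange graph G(S) contains an augmenting path from s to t with at most 1 + 2|S|/(r − |S|) internal vertices (i.e., of that many elements). -/
/-!
Let `T` be a common independent set with `|T| = r`. If `U` is a set of vertices of `G(S)`
containing `s` but not `t` such that every arc leaving `U` starts at an element of some `X ⊆ S`,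
then splitting `T` along `U` and applying the exchange property in `M₁` to one part and in `M₂`
to the other gives `r ≤ |S| + |X|`. With `X = ∅` this shows that `t` is reachable from `s`; its
distance `2k` is even because arcs alternate between `S` and its complement. For `1 ≤ i < k`, the
ball of radius `2i` around `s` is such a cut, with `X` the layer of elements at distance exactly
`2i` (they lie in `S` by parity). The `k - 1` layers are disjoint subsets of `S` of size at least
`r - |S|`, so `(k - 1)(r - |S|) ≤ |S|`, and a shortest augmenting path has `2k - 1` internal
elements.
-/

open Classical

noncomputable section

variable {α : Type*} [DecidableEq α]

/-- Vertices of the exchange graph: a source `src`, a sink `snk`, and the ground elements. -/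
inductive EGV (α : Type*) where
  | src : EGV α
  | snk : EGV α
  | el : α → EGV α

/-- Arcs of the exchange graph `G(S)` for `S ∈ I₁ ∩ I₂`. -/
def egAdj (M₁ M₂ : FinMatroid α) (S : Finset α) : EGV α → EGV α → Prop
  | EGV.src, EGV.el b => b ∉ S ∧ M₁.Indep (insert b S)
  | EGV.el b, EGV.snk => b ∉ S ∧ M₂.Indep (insert b S)
  | EGV.el x, EGV.el y =>
      (x ∈ S ∧ y ∉ S ∧ M₁.Indep (insert y (S.erase x))) ∨
      (x ∉ S ∧ y ∈ S ∧ M₂.Indep (insert x (S.erase y)))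
  | _, _ => False

/-- Directed shortest-path distance in the exchange graph (number of arcs), `⊤` if unreachable. -/
def egDist (M₁ M₂ : FinMatroid α) (S : Finset α) (u v : EGV α) : ℕ∞ :=
  sInf {n : ℕ∞ | ∃ l : List (EGV α),
    List.Chain' (egAdj M₁ M₂ S) (u :: (l ++ [v])) ∧ n = (l.length : ℕ∞) + 1}

open Finset

namespace FinMatroid

variable {M : FinMatroid α} {S T : Finset α} {b : α}

/-- `exchange` itself is stated with the classical `DecidableEq α` instance. -/
theorem exists_insert_of_card_lt {A : Finset α} (hA : M.Indep A) (hT : M.Indep T)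
    (h : A.card < T.card) :
    ∃ b ∈ T \ A, M.Indep (insert b A) := by
  convert M.exchange hA hT h

theorem indep_insert_or_exists_indep_insert_erase {A : Finset α} (hS : M.Indep S) (hAS : A ⊆ S)
    (hbS : b ∉ S) (hbA : M.Indep (insert b A)) :
    M.Indep (insert b S) ∨ ∃ a ∈ S \ A, M.Indep (insert b (S.erase a)) := by
  by_cases hcard : (insert b A).card < S.card
  · obtain ⟨x, hx, hxA⟩ := M.exists_insert_of_card_lt hbA hS hcard
    rw [mem_sdiff, mem_insert, not_or] at hx
    have hxAS : insert x A ⊆ S := insert_subset hx.1 hAS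
    have : S.card - (insert x A).card < S.card - A.card := by
      have := card_le_card hxAS
      rw [card_insert_of_notMem hx.2.2] at this ⊢
      omega
    rcases indep_insert_or_exists_indep_insert_erase (A := insert x A) hS hxAS hbS
      (by rwa [insert_comm]) with h | ⟨a, ha, h⟩
    · exact Or.inl h
    · rw [mem_sdiff, mem_insert, not_or] at ha
      exact Or.inr ⟨a, mem_sdiff.2 ⟨ha.1, ha.2.2⟩, h⟩
  · have hbA' : b ∉ A := fun h => hbS (hAS h)
    rw [card_insert_of_notMem hbA', not_lt] at hcard
    obtain hAeq | ⟨a, ha⟩ := (S \ A).eq_empty_or_nonempty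
    · rw [sdiff_eq_empty_iff_subset] at hAeq
      exact Or.inl (by rwa [hAS.antisymm hAeq] at hbA)
    · refine Or.inr ⟨a, ha, ?_⟩
      have hA : A = S.erase a := by
        rw [mem_sdiff] at ha
        refine eq_of_subset_of_card_le (fun x hx => mem_erase.2
          ⟨fun h => ha.2 (h ▸ hx), hAS hx⟩) ?_
        rw [card_erase_of_mem ha.1]
        omega
      rwa [← hA]
termination_by S.card - A.card

theorem card_le_of_forall_not_indep {A : Finset α} (hS : M.Indep S) (hT : M.Indep T) (hAS : A ⊆ S)
    (hTS : T ∩ S ⊆ A)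
    (hno : ∀ b ∈ T, b ∉ S →
      ¬ M.Indep (insert b S) ∧ ∀ a ∈ S \ A, ¬ M.Indep (insert b (S.erase a))) :
    T.card ≤ A.card := by
  by_contra! hlt
  obtain ⟨b, hb, hbA⟩ := M.exists_insert_of_card_lt (M.subset_indep hS hAS) hT hlt
  rw [mem_sdiff] at hb
  have hbS : b ∉ S := fun h => hb.2 (hTS (mem_inter.2 ⟨hb.1, h⟩))
  obtain ⟨hins, hswap⟩ := hno b hb.1 hbS
  rcases M.indep_insert_or_exists_indep_insert_erase hS hAS hbS hbA with h | ⟨a, ha, h⟩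
  · exact hins h
  · exact hswap a ha h

end FinMatroid

namespace ExchangeGraph

variable (M₁ M₂ : FinMatroid α) (S : Finset α)

/-- `ReachIn n v`: some walk with `n` arcs leads from `src` to `v`. -/
inductive ReachIn : ℕ → EGV α → Prop
  | zero : ReachIn 0 EGV.src
  | succ {n : ℕ} {u v : EGV α} : ReachIn n u → egAdj M₁ M₂ S u v → ReachIn (n + 1) v

def IsDist (n : ℕ) (v : EGV α) : Prop :=
  ReachIn M₁ M₂ S n v ∧ ∀ m < n, ¬ ReachIn M₁ M₂ S m v

def layer (n : ℕ) : Finset α :=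
  S.filter fun a => IsDist M₁ M₂ S n (EGV.el a)

/-- Every arc of `G(S)` flips this parity, so it is the parity of the distance from `src`. -/
def parity : EGV α → ZMod 2
  | EGV.el a => if a ∈ S then 0 else 1
  | _ => 0

variable {M₁ M₂ S}

theorem not_adj_src (u : EGV α) : ¬ egAdj M₁ M₂ S u EGV.src := by
  cases u <;> simp [egAdj]

theorem not_adj_snk (v : EGV α) : ¬ egAdj M₁ M₂ S EGV.snk v := by
  cases v <;> simp [egAdj]

theorem parity_of_adj {u v : EGV α} (h : egAdj M₁ M₂ S u v) : parity S v = parity S u + 1 := by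
  cases u <;> cases v <;> simp only [egAdj] at h
  case src.el b => simp only [parity, h.1, if_false]; decide
  case el.snk a => simp only [parity, h.1, if_false]; decide
  case el.el a b =>
    rcases h with ⟨ha, hb, -⟩ | ⟨ha, hb, -⟩ <;>
      simp only [parity, ha, hb, if_true, if_false] <;> decide

theorem ReachIn.parity_eq {n : ℕ} {v : EGV α} (h : ReachIn M₁ M₂ S n v) : parity S v = n := by
  induction h with
  | zero => rfl
  | succ _ huv ih => rw [parity_of_adj huv, ih, Nat.cast_succ]

theorem ReachIn.eq_zero_of_src {n : ℕ} (h : ReachIn M₁ M₂ S n EGV.src) : n = 0 := by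
  cases h with
  | zero => rfl
  | succ _ huv => exact absurd huv (not_adj_src _)

theorem ReachIn.exists_isChain {n : ℕ} {v : EGV α} (h : ReachIn M₁ M₂ S n v) (hn : n ≠ 0) :
    ∃ l : List α, l.length + 1 = n ∧
      (EGV.src :: (l.map EGV.el ++ [v])).IsChain (egAdj M₁ M₂ S) := by
  induction h with
  | zero => exact absurd rfl hn
  | @succ n u v hu huv ih =>
    rcases Nat.eq_zero_or_pos n with rfl | hpos
    · cases hu
      exact ⟨[], rfl, List.isChain_pair.2 huv⟩
    obtain ⟨l, hl, hchain⟩ := ih hpos.ne'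
    cases u with
    | src => exact absurd hu.eq_zero_of_src hpos.ne'
    | snk => exact absurd huv (not_adj_snk _)
    | el a =>
      refine ⟨l ++ [a], by simp [hl], ?_⟩
      simpa [List.isChain_cons_append_cons_cons] using ⟨hchain, huv⟩

theorem IsDist.unique {n m : ℕ} {v : EGV α} (hn : IsDist M₁ M₂ S n v)
    (hm : IsDist M₁ M₂ S m v) : n = m := by
  by_contra hne
  rcases Nat.lt_or_gt_of_ne hne with h | h
  · exact hm.2 n h hn.1
  · exact hn.2 m h hm.1

theorem sum_card_layer_le (N : Finset ℕ) : ∑ n ∈ N, (layer M₁ M₂ S n).card ≤ S.card := by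
  rw [← card_biUnion fun n _ m _ hnm => disjoint_left.2 fun a ha hb =>
    hnm ((mem_filter.1 ha).2.unique (mem_filter.1 hb).2)]
  exact card_le_card (biUnion_subset.2 fun n _ => filter_subset _ _)

theorem card_le_card_add_card_of_cut {T X : Finset α} (U : Set (EGV α))
    (hS₁ : M₁.Indep S) (hS₂ : M₂.Indep S) (hT₁ : M₁.Indep T) (hT₂ : M₂.Indep T)
    (hXS : X ⊆ S) (hsrc : EGV.src ∈ U) (hsnk : EGV.snk ∉ U)
    (hcut : ∀ ⦃u v⦄, u ∈ U → v ∉ U → egAdj M₁ M₂ S u v → ∃ a ∈ X, u = EGV.el a) :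
    T.card ≤ S.card + X.card := by
  have hout : (T.filter (EGV.el · ∉ U)).card ≤ (S.filter (EGV.el · ∉ U) ∪ X).card := by
    refine FinMatroid.card_le_of_forall_not_indep hS₁ (M₁.subset_indep hT₁ (filter_subset _ _))
      (union_subset (filter_subset _ _) hXS) ?_ fun b hb hbS => ⟨fun h => ?_, fun a ha h => ?_⟩
    · intro x hx
      simp only [mem_inter, mem_filter] at hx
      exact mem_union_left _ (mem_filter.2 ⟨hx.2, hx.1.2⟩)
    · obtain ⟨a, -, ha⟩ := hcut hsrc (mem_filter.1 hb).2 ⟨hbS, h⟩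
      cases ha
    · simp only [mem_sdiff, mem_union, mem_filter, not_or, not_and, not_not] at ha
      obtain ⟨a', ha', he⟩ := hcut (ha.2.1 ha.1) (mem_filter.1 hb).2 (Or.inl ⟨ha.1, hbS, h⟩)
      cases he
      exact ha.2.2 ha'
  have hin : (T.filter (EGV.el · ∈ U)).card ≤ (S.filter (EGV.el · ∈ U)).card := by
    refine FinMatroid.card_le_of_forall_not_indep hS₂ (M₂.subset_indep hT₂ (filter_subset _ _))
      (filter_subset _ _) ?_ fun b hb hbS => ⟨fun h => ?_, fun a ha h => ?_⟩
    · intro x hx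
      simp only [mem_inter, mem_filter] at hx
      exact mem_filter.2 ⟨hx.2, hx.1.2⟩
    · obtain ⟨a, ha, he⟩ := hcut (mem_filter.1 hb).2 hsnk ⟨hbS, h⟩
      cases he
      exact hbS (hXS ha)
    · simp only [mem_sdiff, mem_filter, not_and] at ha
      obtain ⟨a', ha', he⟩ := hcut (mem_filter.1 hb).2 (ha.2 ha.1) (Or.inr ⟨hbS, ha.1, h⟩)
      cases he
      exact hbS (hXS ha')
  have hTsplit := card_filter_add_card_filter_not (s := T) (EGV.el · ∈ U)
  have hSsplit := card_filter_add_card_filter_not (s := S) (EGV.el · ∈ U)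
  have hunion := card_union_le (S.filter (EGV.el · ∉ U)) X
  omega

theorem exists_reachIn_snk {T : Finset α} (hS₁ : M₁.Indep S) (hS₂ : M₂.Indep S)
    (hT₁ : M₁.Indep T) (hT₂ : M₂.Indep T) (hST : S.card < T.card) :
    ∃ n, ReachIn M₁ M₂ S n EGV.snk := by
  by_contra hsnk
  have := card_le_card_add_card_of_cut {v | ∃ n, ReachIn M₁ M₂ S n v} hS₁ hS₂ hT₁ hT₂
    (empty_subset S) ⟨0, .zero⟩ hsnk fun u v ⟨n, hu⟩ hv huv => absurd ⟨n + 1, hu.succ huv⟩ hv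
  simp only [card_empty, add_zero] at this
  omega

theorem card_le_card_add_card_layer {T : Finset α} {i k : ℕ} (hS₁ : M₁.Indep S)
    (hS₂ : M₂.Indep S) (hT₁ : M₁.Indep T) (hT₂ : M₂.Indep T)
    (hsnk : IsDist M₁ M₂ S (2 * k) EGV.snk) (hi : 1 ≤ i) (hik : i < k) :
    T.card ≤ S.card + (layer M₁ M₂ S (2 * i)).card := by
  refine card_le_card_add_card_of_cut {v | ∃ n ≤ 2 * i, ReachIn M₁ M₂ S n v} hS₁ hS₂ hT₁ hT₂
    (filter_subset _ _) ⟨0, Nat.zero_le _, .zero⟩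
    (fun ⟨n, hn, h⟩ => hsnk.2 n (by omega) h) ?_
  rintro u v ⟨n, hn, hu⟩ hv huv
  have hv' : ∀ m ≤ 2 * i, ¬ ReachIn M₁ M₂ S m v := fun m hm h => hv ⟨m, hm, h⟩
  have hn' : n = 2 * i := by
    by_contra
    exact hv' (n + 1) (by omega) (hu.succ huv)
  subst hn'
  cases u with
  | src => exact absurd (ReachIn.zero.succ huv) (hv' 1 (by omega))
  | snk => exact absurd huv (not_adj_snk _)
  | el a =>
    have haS : a ∈ S := by
      by_contra haS
      have := hu.parity_eq
      rw [ZMod.natCast_eq_zero_iff_even.2 (even_two_mul i)] at this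
      simp [parity, haS] at this
    exact ⟨a, mem_filter.2 ⟨haS, hu, fun m hm h => hv' (m + 1) hm (h.succ huv)⟩, rfl⟩

theorem exists_isDist_snk {T : Finset α} (hS₁ : M₁.Indep S) (hS₂ : M₂.Indep S)
    (hT₁ : M₁.Indep T) (hT₂ : M₂.Indep T) (hST : S.card < T.card) :
    ∃ k, 0 < k ∧ IsDist M₁ M₂ S (2 * k) EGV.snk := by
  have hreach := exists_reachIn_snk hS₁ hS₂ hT₁ hT₂ hST
  have hdist : IsDist M₁ M₂ S (Nat.find hreach) EGV.snk :=
    ⟨Nat.find_spec hreach, fun _ => Nat.find_min hreach⟩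
  obtain ⟨k, hk⟩ := (ZMod.natCast_eq_zero_iff_even.1 hdist.1.parity_eq.symm).two_dvd
  rw [hk] at hdist
  refine ⟨k, Nat.pos_of_ne_zero fun hk0 => ?_, hdist⟩
  rw [hk0] at hdist
  cases hdist.1

theorem mul_card_sub_card_le {T : Finset α} {k : ℕ} (hS₁ : M₁.Indep S) (hS₂ : M₂.Indep S)
    (hT₁ : M₁.Indep T) (hT₂ : M₂.Indep T) (hsnk : IsDist M₁ M₂ S (2 * k) EGV.snk) :
    (k - 1) * (T.card - S.card) ≤ S.card :=
  calc (k - 1) * (T.card - S.card) = ∑ _i ∈ Icc 1 (k - 1), (T.card - S.card) := by simp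
    _ ≤ ∑ i ∈ Icc 1 (k - 1), (layer M₁ M₂ S (2 * i)).card := sum_le_sum fun i hi => by
      rw [mem_Icc] at hi
      have := card_le_card_add_card_layer hS₁ hS₂ hT₁ hT₂ hsnk hi.1 (by omega)
      omega
    _ = ∑ n ∈ (Icc 1 (k - 1)).image (2 * ·), (layer M₁ M₂ S n).card :=
      by rw [sum_image fun a _ b _ (h : 2 * a = 2 * b) => by omega]
    _ ≤ S.card := sum_card_layer_le _

end ExchangeGraph

theorem cast_le_one_add_two_mul_div {m k s r : ℕ} (hm : m + 1 = 2 * k) (hsr : s < r)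
    (h : (k - 1) * (r - s) ≤ s) : (m : ℝ) ≤ 1 + 2 * (s : ℝ) / ((r : ℝ) - (s : ℝ)) := by
  have hpos : (0 : ℝ) < r - s := by rw [sub_pos]; exact_mod_cast hsr
  have h' : ((k : ℝ) - 1) * (r - s) ≤ s := by
    obtain ⟨j, rfl⟩ : ∃ j, k = j + 1 := ⟨k - 1, by omega⟩
    simpa [Nat.cast_sub hsr.le] using (Nat.cast_le (α := ℝ)).2 h
  have hm' : (m : ℝ) = 2 * k - 1 := by
    rw [eq_sub_iff_add_eq]; exact_mod_cast hm
  have : 2 * ((k : ℝ) - 1) ≤ 2 * s / (r - s) := by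
    rw [le_div_iff₀ hpos]
    linarith
  linarith

theorem short_augmenting_path_general (M₁ M₂ : FinMatroid α) (S : Finset α) (r : ℕ)
    (hS₁ : M₁.Indep S) (hS₂ : M₂.Indep S)
    (hr_ex : ∃ T : Finset α, M₁.Indep T ∧ M₂.Indep T ∧ T.card = r)
    (hlt : S.card < r) :
    ∃ l : List α,
      List.Chain' (egAdj M₁ M₂ S) (EGV.src :: (l.map EGV.el ++ [EGV.snk])) ∧
      (l.length : ℝ) ≤ 1 + 2 * (S.card : ℝ) / ((r : ℝ) - (S.card : ℝ)) := by
  obtain ⟨T, hT₁, hT₂, rfl⟩ := hr_ex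
  obtain ⟨k, hk, hsnk⟩ := ExchangeGraph.exists_isDist_snk hS₁ hS₂ hT₁ hT₂ hlt
  obtain ⟨l, hl, hchain⟩ := hsnk.1.exists_isChain (by omega)
  exact ⟨l, hchain, cast_le_one_add_two_mul_div hl hlt
    (ExchangeGraph.mul_card_sub_card_le hS₁ hS₂ hT₁ hT₂ hsnk)⟩

/-- Cunningham's augmenting-path-length lemma: if the largest common independent set has size
`r` and `S ∈ I₁ ∩ I₂` has `|S| < r`, then the exchange graph `G(S)` contains an augmenting
path from `s` to `t` with at most `1 + 2|S|/(r − |S|)` internal elements. -/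
theorem short_augmenting_path (M₁ M₂ : FinMatroid α) (S : Finset α) (r : ℕ)
    (hS₁ : M₁.Indep S) (hS₂ : M₂.Indep S)
    (hr_ex : ∃ T : Finset α, M₁.Indep T ∧ M₂.Indep T ∧ T.card = r)
    (hr_max : ∀ T : Finset α, M₁.Indep T → M₂.Indep T → T.card ≤ r)
    (hlt : S.card < r) :
    ∃ l : List α,
      List.Chain' (egAdj M₁ M₂ S) (EGV.src :: (l.map EGV.el ++ [EGV.snk])) ∧
      (l.length : ℝ) ≤ 1 + 2 * (S.card : ℝ) / ((r : ℝ) - (S.card : ℝ)) :=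
  short_augmenting_path_general M₁ M₂ S r hS₁ hS₂ hr_ex hlt
end
end

section
/- Let M₁, M₂ be matroids on V with maximum common independent set of size r, and let S ∈ I₁ ∩ I₂. If every s–t path (augmenting path) in the exchange graph G(S) has at least 1/ε elements, then |S| ≥ (1−2ε)r. -/
open Classical

noncomputable section

variable {α : Type*} [DecidableEq α]

lemma FinMatroid.exchange' (M : FinMatroid α) {A B : Finset α} (hA : M.Indep A)
    (hB : M.Indep B) (h : A.card < B.card) :
    ∃ b ∈ B \ A, M.Indep (insert b A) := by
  obtain ⟨b, hb, h2⟩ := M.exchange hA hB h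
  refine ⟨b, ?_, ?_⟩
  · convert hb using 3
  · convert h2 using 4

lemma FinMatroid.grow (M : FinMatroid α) {S : Finset α} {b : α} (hS : M.Indep S) :
    ∀ n (J : Finset α), M.Indep J → J ⊆ insert b S → S.card = J.card + n →
    ∃ K, J ⊆ K ∧ K ⊆ insert b S ∧ M.Indep K ∧ K.card = S.card := by
  intro n
  induction n with
  | zero => intro J hJ hJs hc; exact ⟨J, Finset.Subset.refl J, hJs, hJ, by omega⟩
  | succ n ih =>
    intro J hJ hJs hc
    obtain ⟨c, hc1, hc2⟩ := M.exchange' hJ hS (by omega)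
    have hcS : c ∈ S := (Finset.mem_sdiff.mp hc1).1
    have hcJ : c ∉ J := (Finset.mem_sdiff.mp hc1).2
    obtain ⟨K, h1, h2, h3, h4⟩ := ih (insert c J) hc2
      (Finset.insert_subset (Finset.mem_insert_of_mem hcS) hJs)
      (by rw [Finset.card_insert_of_notMem hcJ]; omega)
    exact ⟨K, (Finset.subset_insert c J).trans h1, h2, h3, h4⟩

lemma exchange_elem (M : FinMatroid α) {S Y : Finset α} {b : α}
    (hS : M.Indep S) (hY : Y ⊆ S) (hb : b ∉ S)
    (hbY : M.Indep (insert b Y)) (hbS : ¬ M.Indep (insert b S)) :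
    ∃ a ∈ S, a ∉ Y ∧ M.Indep (insert b (S.erase a)) := by
  have hYS : Y ≠ S := by rintro rfl; exact hbS hbY
  have hYcard : Y.card < S.card := Finset.card_lt_card (lt_of_le_of_ne hY hYS)
  have hbYc : (insert b Y).card = Y.card + 1 :=
    Finset.card_insert_of_notMem (fun h => hb (hY h))
  obtain ⟨K, h1, h2, h3, h4⟩ := M.grow hS (S.card - (insert b Y).card) (insert b Y) hbY
    (Finset.insert_subset_insert b hY) (by omega)
  have hbK : b ∈ K := h1 (Finset.mem_insert_self b Y)
  have hKne : K ≠ insert b S := by rintro rfl; exact hbS h3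
  have hex : ∃ a, a ∈ insert b S ∧ a ∉ K := by
    by_contra h; push_neg at h
    exact hKne (Finset.Subset.antisymm h2 (fun x hx => h x hx))
  obtain ⟨a, haS, haK⟩ := hex
  have hab : a ≠ b := fun h => haK (h ▸ hbK)
  have haS' : a ∈ S := by
    rcases Finset.mem_insert.mp haS with h | h
    · exact absurd h hab
    · exact h
  have haY : a ∉ Y := fun h => haK (h1 (Finset.mem_insert_of_mem h))
  refine ⟨a, haS', haY, ?_⟩
  have hsub : K ⊆ insert b (S.erase a) := by
    intro x hx
    rcases Finset.mem_insert.mp (h2 hx) with h | h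
    · exact h ▸ Finset.mem_insert_self _ _
    · by_cases hxa : x = a
      · exact absurd hx (hxa ▸ haK)
      · exact Finset.mem_insert_of_mem (Finset.mem_erase.mpr ⟨hxa, h⟩)
  have hae : (insert b (S.erase a)).card = S.card := by
    rw [Finset.card_insert_of_notMem (fun h => hb (Finset.mem_of_mem_erase h)),
      Finset.card_erase_of_mem haS']
    have : 0 < S.card := Finset.card_pos.mpr ⟨a, haS'⟩
    omega
  have hKeq : K = insert b (S.erase a) := Finset.eq_of_subset_of_card_le hsub (by omega)
  exact hKeq ▸ h3

/-- `b` is reachable from `src` in at most `j` arcs. -/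
def reach (M₁ M₂ : FinMatroid α) (S : Finset α) (j : ℕ) (b : α) : Prop :=
  ∃ l : List α, l.length + 1 ≤ j ∧
    List.Chain' (egAdj M₁ M₂ S) (EGV.src :: (l.map EGV.el ++ [EGV.el b]))

variable {M₁ M₂ : FinMatroid α} {S : Finset α}

lemma reach_mono {j j' : ℕ} (h : j ≤ j') {b : α} (hb : reach M₁ M₂ S j b) :
    reach M₁ M₂ S j' b := by
  obtain ⟨l, hl, hc⟩ := hb
  exact ⟨l, le_trans hl h, hc⟩

lemma reach_one {b : α} (hb : b ∉ S) (hi : M₁.Indep (insert b S)) :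
    reach M₁ M₂ S 1 b := by
  refine ⟨[], by norm_num, ?_⟩
  simp only [List.map_nil, List.nil_append]
  exact List.isChain_pair.mpr ⟨hb, hi⟩

lemma reach_step {j : ℕ} {b c : α} (hb : reach M₁ M₂ S j b)
    (h : egAdj M₁ M₂ S (EGV.el b) (EGV.el c)) : reach M₁ M₂ S (j + 1) c := by
  obtain ⟨l, hl, hc⟩ := hb
  refine ⟨l ++ [b], by simp; omega, ?_⟩
  have : EGV.src :: ((l ++ [b]).map EGV.el ++ [EGV.el c]) =
      (EGV.src :: (l.map EGV.el ++ [EGV.el b])) ++ [EGV.el c] := by simp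
  rw [this]
  apply List.IsChain.append hc (List.isChain_singleton _)
  intro x hx y hy
  simp at hy
  subst hy
  have : (EGV.src :: (l.map EGV.el ++ [EGV.el b])).getLast? = some (EGV.el b) := by
    rw [List.getLast?_cons, List.getLast?_append] <;> simp
  rw [this] at hx
  simp at hx
  subst hx
  exact h

lemma reach_snk {ε : ℝ} {j : ℕ} {b : α} (hb : reach M₁ M₂ S j b) (hbS : b ∉ S)
    (hi : M₂.Indep (insert b S))
    (hlong : ∀ l : List α,
      List.Chain' (egAdj M₁ M₂ S) (EGV.src :: (l.map EGV.el ++ [EGV.snk])) →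
      1 / ε ≤ (l.length : ℝ)) : 1 / ε ≤ (j : ℝ) := by
  obtain ⟨l, hl, hc⟩ := hb
  have key : List.Chain' (egAdj M₁ M₂ S) (EGV.src :: ((l ++ [b]).map EGV.el ++ [EGV.snk])) := by
    have : EGV.src :: ((l ++ [b]).map EGV.el ++ [EGV.snk]) =
        (EGV.src :: (l.map EGV.el ++ [EGV.el b])) ++ [EGV.snk] := by simp
    rw [this]
    apply List.IsChain.append hc (List.isChain_singleton _)
    intro x hx y hy
    simp at hy
    subst hy
    have : (EGV.src :: (l.map EGV.el ++ [EGV.el b])).getLast? = some (EGV.el b) := by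
      rw [List.getLast?_cons, List.getLast?_append] <;> simp
    rw [this] at hx
    simp at hx
    subst hx
    exact ⟨hbS, hi⟩
  have := hlong (l ++ [b]) key
  simp only [List.length_append, List.length_singleton, Nat.cast_add, Nat.cast_one] at this
  calc (1:ℝ)/ε ≤ (l.length : ℝ) + 1 := this
    _ ≤ (j : ℝ) := by exact_mod_cast hl

lemma card_le_B {ε : ℝ} (hS₂ : M₂.Indep S) {j : ℕ} (hj : (j : ℝ) < 1 / ε)
    (hlong : ∀ l : List α,
      List.Chain' (egAdj M₁ M₂ S) (EGV.src :: (l.map EGV.el ++ [EGV.snk])) →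
      1 / ε ≤ (l.length : ℝ))
    (X : Finset α) (hX : M₂.Indep X) (hXr : ∀ b ∈ X, reach M₁ M₂ S j b) :
    X.card ≤ (S.filter (fun a => reach M₁ M₂ S (j + 1) a)).card := by
  by_contra hcon
  push_neg at hcon
  set Y := S.filter (fun a => reach M₁ M₂ S (j + 1) a) with hYdef
  have hYind : M₂.Indep Y := M₂.subset_indep hS₂ (Finset.filter_subset _ _)
  obtain ⟨b, hbmem, hbY⟩ := M₂.exchange' hYind hX hcon
  obtain ⟨hbX, hbnY⟩ := Finset.mem_sdiff.mp hbmem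
  have hbr : reach M₁ M₂ S j b := hXr b hbX
  have hbS : b ∉ S := by
    intro h
    exact hbnY (Finset.mem_filter.mpr ⟨h, reach_mono (Nat.le_succ j) hbr⟩)
  by_cases hi : M₂.Indep (insert b S)
  · have := reach_snk hbr hbS hi hlong
    linarith
  · obtain ⟨a, haS, haY, hind⟩ := exchange_elem M₂ hS₂ (Finset.filter_subset _ _) hbS hbY hi
    have harc : egAdj M₁ M₂ S (EGV.el b) (EGV.el a) := Or.inr ⟨hbS, haS, hind⟩
    exact haY (Finset.mem_filter.mpr ⟨haS, reach_step hbr harc⟩)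

lemma card_le_A (hS₁ : M₁.Indep S) {j : ℕ}
    (X : Finset α) (hX : M₁.Indep X) (hXr : ∀ b ∈ X, ¬ reach M₁ M₂ S (j + 1) b) :
    X.card ≤ (S.filter (fun a => ¬ reach M₁ M₂ S j a)).card := by
  by_contra hcon
  push_neg at hcon
  set Y := S.filter (fun a => ¬ reach M₁ M₂ S j a) with hYdef
  have hYind : M₁.Indep Y := M₁.subset_indep hS₁ (Finset.filter_subset _ _)
  obtain ⟨b, hbmem, hbY⟩ := M₁.exchange' hYind hX hcon
  obtain ⟨hbX, hbnY⟩ := Finset.mem_sdiff.mp hbmem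
  have hbnr : ¬ reach M₁ M₂ S (j + 1) b := hXr b hbX
  have hbS : b ∉ S := by
    intro h
    have : reach M₁ M₂ S j b := by
      by_contra hr
      exact hbnY (Finset.mem_filter.mpr ⟨h, hr⟩)
    exact hbnr (reach_mono (Nat.le_succ j) this)
  by_cases hi : M₁.Indep (insert b S)
  · exact hbnr (reach_mono (by omega) (reach_one hbS hi))
  · obtain ⟨a, haS, haY, hind⟩ := exchange_elem M₁ hS₁ (Finset.filter_subset _ _) hbS hbY hi
    have har : reach M₁ M₂ S j a := by
      by_contra hr
      exact haY (Finset.mem_filter.mpr ⟨haS, hr⟩)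
    have harc : egAdj M₁ M₂ S (EGV.el a) (EGV.el b) := Or.inl ⟨haS, hbS, hind⟩
    exact hbnr (reach_step har harc)

lemma reach_zero (b : α) : ¬ reach M₁ M₂ S 0 b := by
  rintro ⟨l, hl, -⟩
  omega

lemma level_step {ε : ℝ} (hS₁ : M₁.Indep S) (hS₂ : M₂.Indep S)
    (hlong : ∀ l : List α,
      List.Chain' (egAdj M₁ M₂ S) (EGV.src :: (l.map EGV.el ++ [EGV.snk])) →
      1 / ε ≤ (l.length : ℝ))
    {T : Finset α} (hT₁ : M₁.Indep T) (hT₂ : M₂.Indep T)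
    {j : ℕ} (hj : ((j + 1 : ℕ) : ℝ) < 1 / ε) :
    (S.filter (fun a => reach M₁ M₂ S j a)).card + T.card ≤
      (S.filter (fun a => reach M₁ M₂ S (j + 2) a)).card + S.card := by
  have h2 : (T.filter (fun b => reach M₁ M₂ S (j + 1) b)).card ≤
      (S.filter (fun a => reach M₁ M₂ S (j + 2) a)).card := by
    have := card_le_B (ε := ε) hS₂ (j := j + 1) hj hlong
      (T.filter (fun b => reach M₁ M₂ S (j + 1) b))
      (M₂.subset_indep hT₂ (Finset.filter_subset _ _))
      (fun b hb => (Finset.mem_filter.mp hb).2)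
    simpa using this
  have h1 : (T.filter (fun b => ¬ reach M₁ M₂ S (j + 1) b)).card ≤
      (S.filter (fun a => ¬ reach M₁ M₂ S j a)).card :=
    card_le_A hS₁ _ (M₁.subset_indep hT₁ (Finset.filter_subset _ _))
      (fun b hb => (Finset.mem_filter.mp hb).2)
  have hsplitT : (T.filter (fun b => reach M₁ M₂ S (j + 1) b)).card +
      (T.filter (fun b => ¬ reach M₁ M₂ S (j + 1) b)).card = T.card :=
    Finset.card_filter_add_card_filter_not _
  have hsplitS : (S.filter (fun a => reach M₁ M₂ S j a)).card +
      (S.filter (fun a => ¬ reach M₁ M₂ S j a)).card = S.card :=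
    Finset.card_filter_add_card_filter_not _
  omega


/-- If every `s`–`t` path in the exchange graph `G(S)` has at least `1/ε` internal elements,
then `|S| ≥ (1 − 2ε)·r`, where `r` is the size of a maximum common independent set. -/
theorem approx_certificate (M₁ M₂ : FinMatroid α) (S : Finset α) (r : ℕ) (ε : ℝ)
    (hε : 0 < ε)
    (hS₁ : M₁.Indep S) (hS₂ : M₂.Indep S)
    (hr_ex : ∃ T : Finset α, M₁.Indep T ∧ M₂.Indep T ∧ T.card = r)
    (hr_max : ∀ T : Finset α, M₁.Indep T → M₂.Indep T → T.card ≤ r)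
    (hlong : ∀ l : List α,
      List.Chain' (egAdj M₁ M₂ S) (EGV.src :: (l.map EGV.el ++ [EGV.snk])) →
      1 / ε ≤ (l.length : ℝ)) :
    (1 - 2 * ε) * (r : ℝ) ≤ (S.card : ℝ) := by
  obtain ⟨T, hT₁, hT₂, hTr⟩ := hr_ex
  have hf0 : (S.filter (fun a => reach M₁ M₂ S 0 a)).card = 0 := by
    rw [Finset.card_eq_zero, Finset.filter_eq_empty_iff]
    exact fun x _ => reach_zero x
  -- the key counting induction
  have key : ∀ k : ℕ, ((2 * k : ℕ) : ℝ) ≤ 1 / ε →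
      k * r ≤ (S.filter (fun a => reach M₁ M₂ S (2 * k) a)).card + k * S.card := by
    intro k
    induction k with
    | zero => intro _; simp
    | succ k ih =>
      intro hk
      have hcast : ((2 * (k + 1) : ℕ) : ℝ) = 2 * (k : ℝ) + 2 := by push_cast; ring
      have hk' : ((2 * k : ℕ) : ℝ) ≤ 1 / ε := by
        push_cast at hk ⊢; linarith
      have hj : ((2 * k + 1 : ℕ) : ℝ) < 1 / ε := by
        push_cast at hk ⊢; linarith
      have hstep := level_step (ε := ε) hS₁ hS₂ hlong hT₁ hT₂ (j := 2 * k) hj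
      have ihk := ih hk'
      have h2 : 2 * k + 2 = 2 * (k + 1) := by ring
      rw [hTr] at hstep
      rw [h2] at hstep
      calc (k + 1) * r = k * r + r := by ring
        _ ≤ (S.filter (fun a => reach M₁ M₂ S (2 * k) a)).card + k * S.card + r := by omega
        _ ≤ (S.filter (fun a => reach M₁ M₂ S (2 * (k + 1)) a)).card + (k + 1) * S.card := by
            have := hstep
            nlinarith [hstep]
  -- choose k := ⌈1/(2ε)⌉₊ - 1
  obtain ⟨k, hmk⟩ : ∃ k, ⌈1 / (2 * ε)⌉₊ = k + 1 :=
    ⟨⌈1 / (2 * ε)⌉₊ - 1, (Nat.succ_pred_eq_of_pos (Nat.ceil_pos.mpr (by positivity))).symm⟩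
  have hmle : 1 / (2 * ε) ≤ ((k : ℝ) + 1) := by
    have := Nat.le_ceil (1 / (2 * ε))
    rw [hmk] at this
    push_cast at this
    linarith
  have hmlt : ((k : ℝ) + 1) < 1 / (2 * ε) + 1 := by
    have := Nat.ceil_lt_add_one (show (0:ℝ) ≤ 1 / (2 * ε) by positivity)
    rw [hmk] at this
    push_cast at this
    linarith
  have h2e : 1 / (2 * ε) = (1 / ε) / 2 := by ring
  have hcond : ((2 * k : ℕ) : ℝ) ≤ 1 / ε := by
    push_cast
    rw [h2e] at hmlt
    linarith
  have hkey := key k hcond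
  have hfle : (S.filter (fun a => reach M₁ M₂ S (2 * k) a)).card ≤ S.card :=
    Finset.card_filter_le _ _
  have hnat : k * r ≤ (k + 1) * S.card := by
    calc k * r ≤ S.card + k * S.card := by omega
      _ = (k + 1) * S.card := by ring
  have hreal : (k : ℝ) * r ≤ ((k : ℝ) + 1) * S.card := by exact_mod_cast hnat
  have hk0 : (0:ℝ) < (k : ℝ) + 1 := by positivity
  have h1 : 1 ≤ ((k : ℝ) + 1) * (2 * ε) := by
    rw [div_le_iff₀ (by positivity)] at hmle
    linarith
  have hr0 : (0:ℝ) ≤ (r : ℝ) := Nat.cast_nonneg r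
  have hS0 : (0:ℝ) ≤ (S.card : ℝ) := Nat.cast_nonneg _
  have hmain : (1 - 2 * ε) * ((k : ℝ) + 1) * r ≤ ((k : ℝ) + 1) * S.card := by
    have : (1 - 2 * ε) * ((k : ℝ) + 1) ≤ (k : ℝ) := by nlinarith
    nlinarith [mul_le_mul_of_nonneg_right this hr0]
  nlinarith [hmain, hk0, mul_pos hk0 hk0]
end
end

section
/- Let S ∈ I₁ ∩ I₂ and let Π = (B₁, A₁, B₂, A₂, …, A_ℓ, B_{ℓ+1}) be an augmenting set in the exchange graph G(S), with shortest s–t distance 2(ℓ+1). Then S ⊕ Π := S + B₁ − A₁ + B₂ − ⋯ + B_ℓ − A_ℓ + B_{ℓ+1} is a common independent set of size |S| + w, where w is the width of Π. -/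
/-!
Distances in `G(S)` alternate in parity, so every `A_k` lies in `S` and every `B_k` outside it.
For `M₁`, start from `S + B₁` and trade `A_k` for `B_{k+1}` for `k = 1, …, ℓ`. Each
`b ∈ B_{k+1}` is spanned by `S − A₁ − ⋯ − A_{k-1}`: otherwise the fundamental circuit of `S + b`
yields an arc into `b` from `s` or from some `A_j` with `j < k`, contradicting
`dist(b) = 2k + 1`. An independent set spanned by `I` and no smaller than `I` has the same
closure as `I`, so each trade preserves independence. For `M₂` the same trades are made in the
order `k = ℓ, …, 1` starting from `S + B_{ℓ+1}`; now an arc from `b ∈ B_k` to `t` or into a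
later `A_j` would shorten `dist(t) = 2(ℓ + 1)` or `dist(A_j) = 2j`.
-/

open Classical

noncomputable section

variable {α : Type*} [DecidableEq α]

/-- An augmenting set `(B 1, A 1, B 2, …, A ℓ, B (ℓ+1))` of width `w` in the exchange graph
`G(S)`: pairwise disjoint sets with `A k ⊆ D_{2k}`, `B k ⊆ D_{2k-1}` (distance layers from the
source), all of cardinality `w`, with `S + B₁ ∈ I₁`, `S + B_{ℓ+1} ∈ I₂`,
`S − A_k + B_{k+1} ∈ I₁` and `S − A_k + B_k ∈ I₂`. -/
def IsAugSet (M₁ M₂ : FinMatroid α) (S : Finset α) (ℓ w : ℕ)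
    (A B : ℕ → Finset α) : Prop :=
  (∀ k ∈ Finset.Icc 1 ℓ, ∀ a ∈ A k,
      egDist M₁ M₂ S EGV.src (EGV.el a) = ((2 * k : ℕ) : ℕ∞)) ∧
  (∀ k ∈ Finset.Icc 1 (ℓ + 1), ∀ b ∈ B k,
      egDist M₁ M₂ S EGV.src (EGV.el b) = ((2 * k - 1 : ℕ) : ℕ∞)) ∧
  (∀ i ∈ Finset.Icc 1 ℓ, ∀ j ∈ Finset.Icc 1 ℓ, i ≠ j → Disjoint (A i) (A j)) ∧
  (∀ i ∈ Finset.Icc 1 (ℓ + 1), ∀ j ∈ Finset.Icc 1 (ℓ + 1), i ≠ j → Disjoint (B i) (B j)) ∧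
  (∀ i ∈ Finset.Icc 1 ℓ, ∀ j ∈ Finset.Icc 1 (ℓ + 1), Disjoint (A i) (B j)) ∧
  (∀ k ∈ Finset.Icc 1 ℓ, (A k).card = w) ∧
  (∀ k ∈ Finset.Icc 1 (ℓ + 1), (B k).card = w) ∧
  M₁.Indep (S ∪ B 1) ∧
  M₂.Indep (S ∪ B (ℓ + 1)) ∧
  (∀ k ∈ Finset.Icc 1 ℓ, M₁.Indep ((S \ A k) ∪ B (k + 1))) ∧
  (∀ k ∈ Finset.Icc 1 ℓ, M₂.Indep ((S \ A k) ∪ B k))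

namespace Matroid

variable {β : Type*} {M : Matroid β} {I J R X : Set β} {e : β}

open Set

lemma Indep.exists_insert_sdiff_singleton_indep (hI : M.Indep I) (heI : e ∉ I)
    (hdep : ¬ M.Indep (insert e I)) (hX : M.Indep (insert e (I \ X))) :
    ∃ x ∈ I ∩ X, M.Indep (insert e (I \ {x})) := by
  have hecl : e ∈ M.closure I := by
    by_contra h
    exact hdep ((hI.insert_indep_iff_of_notMem heI).2 ⟨hX.subset_ground (mem_insert e _), h⟩)
  have hC := hI.fundCircuit_isCircuit hecl heI
  obtain ⟨x, hxC, hxX⟩ := not_subset.1 fun h => hC.not_indep (hX.subset h)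
  have hxI := M.fundCircuit_subset_insert e I hxC
  have hxe : x ≠ e := by rintro rfl; exact hxX (mem_insert x _)
  refine ⟨x, ⟨hxI.resolve_left hxe, by_contra fun h => hxX (.inr ⟨hxI.resolve_left hxe, h⟩)⟩, ?_⟩
  rw [insert_sdiff_singleton_comm hxe.symm]
  exact (hI.mem_fundCircuit_iff hecl heI).1 hxC

lemma Indep.union_indep_of_subset_closure (hIR : M.Indep (I ∪ R)) (hdisj : Disjoint I R)
    (hIfin : I.Finite) (hJ : M.Indep J) (hJI : J ⊆ M.closure I) (hcard : I.encard ≤ J.encard) :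
    M.Indep (J ∪ R) := by
  have hI := hIR.subset subset_union_left
  -- `J` is a basis of `cl I`, and contracting `cl I` does not distinguish `I` from `J`.
  obtain ⟨K, hK, hJK⟩ := hJ.subset_isBasis_of_subset hJI
  have hKI : K.encard = I.encard := by
    rw [hK.encard_eq_eRk, ← hI.isBasis_closure.encard_eq_eRk]
  obtain rfl : J = K :=
    ((hIfin.finite_of_encard_le hKI.le).subset hJK).eq_of_subset_of_encard_le hJK (hKI ▸ hcard)
  have hRcl : Disjoint (M.closure I) R := by
    refine disjoint_left.2 fun x hxI hxR => hIR.notMem_closure_sdiff_of_mem (.inr hxR) ?_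
    exact M.closure_subset_closure (subset_sdiff_singleton subset_union_left
      (disjoint_right.1 hdisj hxR)) hxI
  rw [union_comm]
  exact (hK.contract_indep_iff.1 (hI.isBasis_closure.contract_indep_iff.2
    ⟨by rwa [union_comm], hRcl⟩)).1

end Matroid

open Finset

namespace FinMatroid

variable (M : FinMatroid α)

def toMatroid : Matroid α :=
  (IndepMatroid.ofFinset Set.univ M.Indep M.empty_indep (fun _ _ hJ hIJ => M.subset_indep hJ hIJ)
    (fun I J hI hJ hIJ => by
      obtain ⟨e, he, hi⟩ := M.exchange hI hJ hIJ
      -- the axioms of `FinMatroid` use the classical `DecidableEq` instance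
      have he' : e ∈ J \ I := by convert he
      exact ⟨e, (mem_sdiff.1 he').1, (mem_sdiff.1 he').2, by convert hi⟩)
    (fun _ _ => Set.subset_univ _)).matroid

variable {M}

@[simp]
lemma toMatroid_E : M.toMatroid.E = Set.univ := rfl

@[simp]
lemma toMatroid_indep_coe {I : Finset α} : M.toMatroid.Indep I ↔ M.Indep I := by
  simp [toMatroid]

lemma mem_toMatroid_closure_of_not_indep_insert {I : Finset α} {e : α} (hI : M.Indep I)
    (he : ¬ M.Indep (insert e I)) : e ∈ M.toMatroid.closure I := by
  by_contra hcl
  refine he (toMatroid_indep_coe.1 ?_)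
  rw [coe_insert, (toMatroid_indep_coe.2 hI).insert_indep_iff]
  exact .inl ⟨Set.mem_univ e, hcl⟩

lemma exists_indep_insert_erase {S X : Finset α} {b : α} (hS : M.Indep S) (hbS : b ∉ S)
    (hdep : ¬ M.Indep (insert b S)) (hX : M.Indep (insert b (S \ X))) :
    ∃ x ∈ S ∩ X, M.Indep (insert b (S.erase x)) := by
  obtain ⟨x, hx, hxi⟩ := (toMatroid_indep_coe.2 hS).exists_insert_sdiff_singleton_indep
    (mod_cast hbS) (by rwa [← coe_insert, toMatroid_indep_coe])
    (by rwa [← coe_sdiff, ← coe_insert, toMatroid_indep_coe])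
  exact ⟨x, mod_cast hx, by rwa [← coe_erase, ← coe_insert, toMatroid_indep_coe] at hxi⟩

lemma indep_sdiff_union_union_of_not_indep_insert {I R X Y : Finset α}
    (hIR : M.Indep (I ∪ R)) (hdisj : Disjoint I R) (hJ : M.Indep (I \ X ∪ Y))
    (hYI : Disjoint Y I) (hcard : X.card ≤ Y.card) (hY : ∀ y ∈ Y, ¬ M.Indep (insert y I)) :
    M.Indep (I \ X ∪ Y ∪ R) := by
  have hI : M.Indep I := M.subset_indep hIR subset_union_left
  have hJI : ((I \ X ∪ Y : Finset α) : Set α) ⊆ M.toMatroid.closure I := by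
    intro y hy
    rcases mem_union.1 (mem_coe.1 hy) with hy | hy
    · exact M.toMatroid.subset_closure I (by simp) (mem_sdiff.1 hy).1
    · exact mem_toMatroid_closure_of_not_indep_insert hI (hY y hy)
  have hcard' : I.card ≤ (I \ X ∪ Y).card := by
    rw [card_union_of_disjoint (hYI.symm.mono_left sdiff_subset)]
    exact (card_le_card_sdiff_add_card (t := X)).trans (by omega)
  rw [← toMatroid_indep_coe, coe_union] at hIR ⊢
  refine hIR.union_indep_of_subset_closure (disjoint_coe.2 hdisj) I.finite_toSet
    (toMatroid_indep_coe.2 hJ) hJI ?_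
  simp only [Set.encard_coe_eq_coe_finsetCard]
  exact_mod_cast hcard'

theorem indep_sdiff_biUnion_union {ι : Type*} [LinearOrder ι] {S R : Finset α}
    (A B : ι → Finset α) (s : Finset ι) (hSR : M.Indep (S ∪ R)) (hdisj : Disjoint S R)
    (hBS : ∀ k ∈ s, Disjoint (B k) S) (hcard : ∀ k ∈ s, (A k).card ≤ (B k).card)
    (hexch : ∀ k ∈ s, M.Indep (S \ A k ∪ B k))
    (hspan : ∀ k ∈ s, ∀ b ∈ B k, ¬ M.Indep (insert b (S \ (s.filter (· < k)).biUnion A))) :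
    M.Indep (S \ s.biUnion A ∪ (R ∪ s.biUnion B)) := by
  induction s using Finset.induction_on_max with
  | empty => simpa
  | insert a s has ih =>
    have hfilter : ∀ k ∈ s, (insert a s).filter (· < k) = s.filter (· < k) := fun k hk => by
      rw [filter_insert, if_neg (not_lt.2 (has k hk).le)]
    have hfilter_a : (insert a s).filter (· < a) = s := by
      rw [filter_insert, if_neg (lt_irrefl a), filter_true_of_mem has]
    have hIR := ih (fun k hk => hBS k (mem_insert_of_mem hk))
      (fun k hk => hcard k (mem_insert_of_mem hk)) (fun k hk => hexch k (mem_insert_of_mem hk))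
      (fun k hk => hfilter k hk ▸ hspan k (mem_insert_of_mem hk))
    have hdisj' : Disjoint (S \ s.biUnion A) (R ∪ s.biUnion B) :=
      disjoint_union_right.2 ⟨hdisj.mono_left sdiff_subset, disjoint_biUnion_right _ _ _ |>.2
        fun k hk => (hBS k (mem_insert_of_mem hk)).symm.mono_left sdiff_subset⟩
    have hJ : M.Indep ((S \ s.biUnion A) \ A a ∪ B a) :=
      M.subset_indep (hexch a (mem_insert_self a s))
        (union_subset_union (sdiff_subset_sdiff sdiff_subset subset_rfl) subset_rfl)
    have key := indep_sdiff_union_union_of_not_indep_insert hIR hdisj' hJ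
      ((hBS a (mem_insert_self a s)).mono_right sdiff_subset) (hcard a (mem_insert_self a s))
      (hfilter_a ▸ hspan a (mem_insert_self a s))
    convert key using 1
    ext x
    simp only [biUnion_insert, mem_union, mem_sdiff]
    tauto

end FinMatroid

theorem List.IsChain.apply_eq_add_length {β G : Type*} [AddCommMonoidWithOne G]
    {R : β → β → Prop} {φ : β → G} (hφ : ∀ a b, R a b → φ b = φ a + 1) {v : β} :
    ∀ {u : β} {l : List β}, List.IsChain R (u :: (l ++ [v])) → φ v = φ u + (l.length + 1 : ℕ)
  | u, [], h => by simpa using hφ u v (List.isChain_pair.1 h)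
  | u, x :: l, h => by
    rw [List.cons_append, List.isChain_cons_cons] at h
    rw [apply_eq_add_length hφ h.2, hφ u x h.1, List.length_cons]
    push_cast
    abel

section ExchangeGraph

variable {M₁ M₂ : FinMatroid α} {S : Finset α}

lemma egDist_le_of_isChain {u v : EGV α} {l : List (EGV α)}
    (h : List.IsChain (egAdj M₁ M₂ S) (u :: (l ++ [v]))) :
    egDist M₁ M₂ S u v ≤ l.length + 1 :=
  sInf_le ⟨l, h, rfl⟩

lemma exists_isChain_of_egDist_ne_top {u v : EGV α} (h : egDist M₁ M₂ S u v ≠ ⊤) :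
    ∃ l : List (EGV α), List.IsChain (egAdj M₁ M₂ S) (u :: (l ++ [v])) ∧
      egDist M₁ M₂ S u v = l.length + 1 := by
  obtain ⟨_, ⟨l₀, hl₀, rfl⟩, -⟩ := sInf_lt_iff.1 (lt_top_iff_ne_top.2 h)
  obtain ⟨l, hl, hd⟩ : egDist M₁ M₂ S u v ∈ {n : ℕ∞ | ∃ l : List (EGV α),
      List.IsChain (egAdj M₁ M₂ S) (u :: (l ++ [v])) ∧ n = l.length + 1} :=
    csInf_mem ⟨_, l₀, hl₀, rfl⟩
  exact ⟨l, hl, hd⟩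

lemma egDist_le_add_one {w u v : EGV α} (huv : egAdj M₁ M₂ S u v) :
    egDist M₁ M₂ S w v ≤ egDist M₁ M₂ S w u + 1 := by
  by_cases hu : egDist M₁ M₂ S w u = ⊤
  · simp [hu]
  obtain ⟨l, hl, hd⟩ := exists_isChain_of_egDist_ne_top hu
  have hlv : List.IsChain (egAdj M₁ M₂ S) (w :: ((l ++ [u]) ++ [v])) := by
    rw [List.append_assoc, List.singleton_append, ← List.cons_append, List.isChain_split]
    exact ⟨hl, List.isChain_pair.2 huv⟩
  simpa [hd] using egDist_le_of_isChain hlv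

def egParity (S : Finset α) : EGV α → ZMod 2
  | EGV.el x => if x ∈ S then 0 else 1
  | _ => 0

lemma egParity_of_egAdj {u v : EGV α} (h : egAdj M₁ M₂ S u v) :
    egParity S v = egParity S u + 1 := by
  cases u <;> cases v <;> simp only [egAdj] at h <;> simp only [egParity] <;> grind

lemma mem_iff_even_of_egDist_eq {b : α} {n : ℕ}
    (h : egDist M₁ M₂ S EGV.src (EGV.el b) = n) : b ∈ S ↔ Even n := by
  obtain ⟨l, hl, hd⟩ := exists_isChain_of_egDist_ne_top (h ▸ ENat.natCast_ne_top n)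
  have hn : n = l.length + 1 := by exact_mod_cast h.symm.trans hd
  have hpar := hl.apply_eq_add_length (φ := egParity S) fun _ _ => egParity_of_egAdj
  rw [← hn] at hpar
  simp only [egParity, zero_add] at hpar
  split_ifs at hpar with hb
  · simp [hb, ← ZMod.natCast_eq_zero_iff_even, hpar]
  · simp [hb, ← Nat.not_odd_iff_even, ← ZMod.natCast_eq_one_iff_odd, hpar]

lemma egDist_src_el_le_of_indep_insert {b : α} {X : Finset α} (hS : M₁.Indep S) (hbS : b ∉ S)
    (hind : M₁.Indep (insert b (S \ X))) :
    egDist M₁ M₂ S EGV.src (EGV.el b) ≤ 1 ∨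
      ∃ x ∈ X, egDist M₁ M₂ S EGV.src (EGV.el b) ≤ egDist M₁ M₂ S EGV.src (EGV.el x) + 1 := by
  by_cases hbS' : M₁.Indep (insert b S)
  · left
    simpa using egDist_le_of_isChain (l := []) (List.isChain_pair.2 (show egAdj M₁ M₂ S
      EGV.src (EGV.el b) from ⟨hbS, hbS'⟩))
  · obtain ⟨x, hx, hxb⟩ := FinMatroid.exists_indep_insert_erase hS hbS hbS' hind
    exact .inr ⟨x, (mem_inter.1 hx).2, egDist_le_add_one (Or.inl ⟨(mem_inter.1 hx).1, hbS, hxb⟩)⟩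

lemma egDist_snk_le_of_indep_insert {w : EGV α} {b : α} {X : Finset α} (hS : M₂.Indep S)
    (hbS : b ∉ S) (hind : M₂.Indep (insert b (S \ X))) :
    egDist M₁ M₂ S w EGV.snk ≤ egDist M₁ M₂ S w (EGV.el b) + 1 ∨
      ∃ x ∈ X, egDist M₁ M₂ S w (EGV.el x) ≤ egDist M₁ M₂ S w (EGV.el b) + 1 := by
  by_cases hbS' : M₂.Indep (insert b S)
  · exact .inl (egDist_le_add_one ⟨hbS, hbS'⟩)
  · obtain ⟨x, hx, hxb⟩ := FinMatroid.exists_indep_insert_erase hS hbS hbS' hind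
    exact .inr ⟨x, (mem_inter.1 hx).2, egDist_le_add_one (Or.inr ⟨hbS, (mem_inter.1 hx).1, hxb⟩)⟩

end ExchangeGraph

namespace IsAugSet

variable {M₁ M₂ : FinMatroid α} {S : Finset α} {ℓ w : ℕ} {A B : ℕ → Finset α}

lemma subset (h : IsAugSet M₁ M₂ S ℓ w A B) {k : ℕ} (hk : k ∈ Icc 1 ℓ) : A k ⊆ S :=
  fun a ha => (mem_iff_even_of_egDist_eq (h.1 k hk a ha)).2 (even_two_mul k)

lemma disjoint (h : IsAugSet M₁ M₂ S ℓ w A B) {k : ℕ} (hk : k ∈ Icc 1 (ℓ + 1)) :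
    Disjoint (B k) S := by
  refine disjoint_left.2 fun b hb hbS => ?_
  have hodd : Odd (2 * k - 1) := ⟨k - 1, by grind⟩
  exact Nat.not_even_iff_odd.2 hodd ((mem_iff_even_of_egDist_eq (h.2.1 k hk b hb)).1 hbS)

lemma indep_left (h : IsAugSet M₁ M₂ S ℓ w A B) :
    M₁.Indep ((S \ (Icc 1 ℓ).biUnion A) ∪ (Icc 1 (ℓ + 1)).biUnion B) := by
  have ⟨hdA, hdB, _, _, _, hcA, hcB, hB₁, _, hI₁, _⟩ := h
  have hS : M₁.Indep S := M₁.subset_indep hB₁ subset_union_left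
  have hsucc : ∀ {k}, k ∈ Icc 1 ℓ → k + 1 ∈ Icc 1 (ℓ + 1) := by simp only [mem_Icc]; omega
  rw [← insert_Icc_add_one_left_eq_Icc (by omega : 1 ≤ ℓ + 1), biUnion_insert,
    ← image_add_right_Icc 1 ℓ 1, image_biUnion]
  refine M₁.indep_sdiff_biUnion_union A (fun k => B (k + 1)) (Icc 1 ℓ) hB₁
    (h.disjoint (by simp)).symm (fun k hk => h.disjoint (hsucc hk))
    (fun k hk => by rw [hcA k hk, hcB (k + 1) (hsucc hk)]) hI₁ ?_
  intro k hk b hb hind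
  rcases egDist_src_el_le_of_indep_insert (M₂ := M₂) hS
    (disjoint_left.1 (h.disjoint (hsucc hk)) hb) hind with hle | ⟨x, hx, hle⟩
  · rw [hdB (k + 1) (hsucc hk) b hb] at hle
    simp only [mem_Icc] at hk
    norm_cast at hle
    omega
  · obtain ⟨j, hj, hxj⟩ := mem_biUnion.1 hx
    rw [mem_filter] at hj
    rw [hdB (k + 1) (hsucc hk) b hb, hdA j hj.1 x hxj] at hle
    norm_cast at hle
    omega

lemma indep_right (h : IsAugSet M₁ M₂ S ℓ w A B)
    (hdist : egDist M₁ M₂ S EGV.src EGV.snk = ((2 * (ℓ + 1) : ℕ) : ℕ∞)) :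
    M₂.Indep ((S \ (Icc 1 ℓ).biUnion A) ∪ (Icc 1 (ℓ + 1)).biUnion B) := by
  have ⟨hdA, hdB, _, _, _, hcA, hcB, _, hB, _, hI₂⟩ := h
  have hS : M₂.Indep S := M₂.subset_indep hB subset_union_left
  have hle : ∀ {k}, k ∈ Icc 1 ℓ → k ∈ Icc 1 (ℓ + 1) := by simp only [mem_Icc]; omega
  rw [← insert_Icc_right_eq_Icc_add_one (by omega : 1 ≤ ℓ + 1), biUnion_insert]
  have hspan : ∀ k ∈ Icc 1 ℓ, ∀ b ∈ B k,
      ¬ M₂.Indep (insert b (S \ ((Icc 1 ℓ).filter (k < ·)).biUnion A)) := by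
    intro k hk b hb hind
    rcases egDist_snk_le_of_indep_insert hS (disjoint_left.1 (h.disjoint (hle hk)) hb) hind
      with hle' | ⟨x, hx, hle'⟩
    · rw [hdist, hdB k (hle hk) b hb] at hle'
      simp only [mem_Icc] at hk
      norm_cast at hle'
      omega
    · obtain ⟨j, hj, hxj⟩ := mem_biUnion.1 hx
      rw [mem_filter] at hj
      rw [hdA j hj.1 x hxj, hdB k (hle hk) b hb] at hle'
      norm_cast at hle'
      omega
  -- the exchanges for `M₂` run through the layers in decreasing order
  exact M₂.indep_sdiff_biUnion_union (ι := ℕᵒᵈ) A B (Icc 1 ℓ : Finset ℕ) hB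
    (h.disjoint (by simp)).symm (fun k hk => h.disjoint (hle hk))
    (fun k hk => by rw [hcA k hk, hcB k (hle hk)]) hI₂ hspan

lemma card_eq (h : IsAugSet M₁ M₂ S ℓ w A B) :
    ((S \ (Icc 1 ℓ).biUnion A) ∪ (Icc 1 (ℓ + 1)).biUnion B).card = S.card + w := by
  have ⟨_, _, hAA, hBB, _, hcA, hcB, _⟩ := h
  have hAS : (Icc 1 ℓ).biUnion A ⊆ S := biUnion_subset.2 fun k hk => h.subset hk
  have hdisj : Disjoint (S \ (Icc 1 ℓ).biUnion A) ((Icc 1 (ℓ + 1)).biUnion B) :=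
    (disjoint_biUnion_right _ _ _).2 fun k hk => (h.disjoint hk).symm.mono_left sdiff_subset
  have hcardA : ((Icc 1 ℓ).biUnion A).card = ℓ * w := by
    rw [card_biUnion hAA, sum_const_nat hcA, Nat.card_Icc, Nat.add_sub_cancel]
  have hcardB : ((Icc 1 (ℓ + 1)).biUnion B).card = ℓ * w + w := by
    rw [card_biUnion hBB, sum_const_nat hcB, Nat.card_Icc, Nat.add_sub_cancel, add_one_mul]
  have hle := card_le_card hAS
  rw [card_union_of_disjoint hdisj, card_sdiff_of_subset hAS, hcardA, hcardB]
  rw [hcardA] at hle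
  omega

end IsAugSet

theorem augset_augments_general (M₁ M₂ : FinMatroid α) (S : Finset α) (ℓ w : ℕ)
    (A B : ℕ → Finset α)
    (hdist : egDist M₁ M₂ S EGV.src EGV.snk = ((2 * (ℓ + 1) : ℕ) : ℕ∞))
    (hAug : IsAugSet M₁ M₂ S ℓ w A B) :
    M₁.Indep ((S \ (Finset.Icc 1 ℓ).biUnion A) ∪ (Finset.Icc 1 (ℓ + 1)).biUnion B) ∧
    M₂.Indep ((S \ (Finset.Icc 1 ℓ).biUnion A) ∪ (Finset.Icc 1 (ℓ + 1)).biUnion B) ∧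
    ((S \ (Finset.Icc 1 ℓ).biUnion A) ∪ (Finset.Icc 1 (ℓ + 1)).biUnion B).card
      = S.card + w :=
  ⟨hAug.indep_left, hAug.indep_right hdist, hAug.card_eq⟩

/-- Augmenting along an augmenting set: if `Π = (B₁, A₁, …, A_ℓ, B_{ℓ+1})` is an augmenting set
of width `w` in `G(S)` (whose shortest `s`–`t` distance is `2(ℓ+1)`), then
`S ⊕ Π = S − (A₁ ∪ ⋯ ∪ A_ℓ) + (B₁ ∪ ⋯ ∪ B_{ℓ+1})` is a common independent set of size
`|S| + w`. -/
theorem augset_augments (M₁ M₂ : FinMatroid α) (S : Finset α) (ℓ w : ℕ)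
    (A B : ℕ → Finset α)
    (hS₁ : M₁.Indep S) (hS₂ : M₂.Indep S)
    (hdist : egDist M₁ M₂ S EGV.src EGV.snk = ((2 * (ℓ + 1) : ℕ) : ℕ∞))
    (hAug : IsAugSet M₁ M₂ S ℓ w A B) :
    M₁.Indep ((S \ (Finset.Icc 1 ℓ).biUnion A) ∪ (Finset.Icc 1 (ℓ + 1)).biUnion B) ∧
    M₂.Indep ((S \ (Finset.Icc 1 ℓ).biUnion A) ∪ (Finset.Icc 1 (ℓ + 1)).biUnion B) ∧
    ((S \ (Finset.Icc 1 ℓ).biUnion A) ∪ (Finset.Icc 1 (ℓ + 1)).biUnion B).card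
      = S.card + w :=
  augset_augments_general M₁ M₂ S ℓ w A B hdist hAug
end
end

section
/- Let M = (V, I) be a matroid, S ∈ I, let X₁,…,X_k be disjoint subsets of S and Y₁,…,Y_k be disjoint subsets of V \ S with |X_i| = |Y_i| for all i. Suppose (a) for all i < j and all x ∈ X_i, y ∈ Y_j, S − x + y ∉ I (no exchange-graph edge from X_i to Y_j for j > i), and (b) S − X₁ + Y₁ − X₂ + Y₂ − ⋯ − X_k + Y_k ∈ I. Then S − X_i + Y_i ∈ I for every i. -/
open Classical

noncomputable section

variable {α : Type*} [DecidableEq α]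

namespace FinMatroid

variable (M : FinMatroid α)

lemma exchange'_s9 (M : FinMatroid α) {A B : Finset α} (hA : M.Indep A)
    (hB : M.Indep B) (h : A.card < B.card) :
    ∃ b, b ∈ B ∧ b ∉ A ∧ M.Indep (insert b A) := by
  obtain ⟨b, hb, hbi⟩ := M.exchange hA hB h
  have hb' := (@Finset.mem_sdiff _ (fun a b => propDecidable (a = b)) _ _ _).mp hb
  refine ⟨b, hb'.1, hb'.2, ?_⟩
  convert hbi using 2
  congr!

omit [DecidableEq α] in
lemma card_le_rank {A T : Finset α} (hA : M.Indep A) (hAT : A ⊆ T) :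
    A.card ≤ M.rank T :=
  Finset.le_sup (by simp only [Finset.mem_filter, Finset.mem_powerset]; exact ⟨hAT, hA⟩)

omit [DecidableEq α] in
lemma exists_basis (T : Finset α) : ∃ B, B ⊆ T ∧ M.Indep B ∧ B.card = M.rank T := by
  obtain ⟨B, hB, hBc⟩ := Finset.exists_mem_eq_sup (T.powerset.filter fun A => M.Indep A)
    ⟨∅, by simp [M.empty_indep]⟩ Finset.card
  simp only [Finset.mem_filter, Finset.mem_powerset] at hB
  exact ⟨B, hB.1, hB.2, hBc.symm⟩

omit [DecidableEq α] in
lemma rank_le_card (T : Finset α) : M.rank T ≤ T.card :=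
  Finset.sup_le fun A hA => by
    simp only [Finset.mem_filter, Finset.mem_powerset] at hA
    exact Finset.card_le_card hA.1

omit [DecidableEq α] in
lemma indep_of_rank_eq_card {T : Finset α} (h : T.card ≤ M.rank T) : M.Indep T := by
  obtain ⟨B, hBT, hBi, hBc⟩ := M.exists_basis T
  have : B = T := Finset.eq_of_subset_of_card_le hBT (by omega)
  rwa [← this]

omit [DecidableEq α] in
lemma rank_mono {T T' : Finset α} (h : T ⊆ T') : M.rank T ≤ M.rank T' := by
  obtain ⟨B, hBT, hBi, hBc⟩ := M.exists_basis T
  rw [← hBc]; exact M.card_le_rank hBi (hBT.trans h)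

lemma exists_superset_aux : ∀ n (A B : Finset α), M.Indep A → M.Indep B →
    A.card + n = B.card → ∃ D, A ⊆ D ∧ D ⊆ A ∪ B ∧ M.Indep D ∧ D.card = B.card := by
  intro n
  induction n with
  | zero => intro A B hA _ h; exact ⟨A, subset_rfl, Finset.subset_union_left, hA, by omega⟩
  | succ n ih =>
    intro A B hA hB h
    obtain ⟨b, hbB, hbA, hbi⟩ := M.exchange'_s9 hA hB (by omega)
    obtain ⟨D, hD1, hD2, hD3, hD4⟩ := ih (insert b A) B hbi hB
      (by rw [Finset.card_insert_of_notMem hbA]; omega)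
    refine ⟨D, (Finset.subset_insert _ _).trans hD1, hD2.trans ?_, hD3, hD4⟩
    intro x hx
    rcases Finset.mem_union.mp hx with hx | hx
    · rcases Finset.mem_insert.mp hx with rfl | hx
      · exact Finset.mem_union_right _ hbB
      · exact Finset.mem_union_left _ hx
    · exact Finset.mem_union_right _ hx

lemma exists_superset {A B : Finset α} (hA : M.Indep A) (hB : M.Indep B)
    (h : A.card ≤ B.card) :
    ∃ D, A ⊆ D ∧ D ⊆ A ∪ B ∧ M.Indep D ∧ D.card = B.card :=
  M.exists_superset_aux (B.card - A.card) A B hA hB (by omega)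

lemma exists_basis_superset {Z W : Finset α} (hZ : M.Indep Z) (hZW : Z ⊆ W) :
    ∃ D, Z ⊆ D ∧ D ⊆ W ∧ D.card = M.rank W ∧ M.Indep D := by
  obtain ⟨B, hBW, hBi, hBc⟩ := M.exists_basis W
  obtain ⟨D, h1, h2, h3, h4⟩ := M.exists_superset hZ hBi (hBc ▸ M.card_le_rank hZ hZW)
  exact ⟨D, h1, h2.trans (Finset.union_subset hZW hBW), by omega, h3⟩

lemma rank_union_le {Z T W : Finset α} (hZ : M.Indep Z) (hZT : Z ⊆ T)
    (hZc : M.rank T ≤ Z.card) (hZW : Z ⊆ W) : M.rank (W ∪ T) ≤ M.rank W := by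
  obtain ⟨D, hZD, hDW, hDc, hDi⟩ := M.exists_basis_superset hZ hZW
  by_contra hlt
  push_neg at hlt
  obtain ⟨E, hET, hEi, hEc⟩ := M.exists_basis (W ∪ T)
  obtain ⟨b, hbE, hbD, hbi⟩ := M.exchange'_s9 hDi hEi (by omega)
  have hbW : b ∉ W := by
    intro hbW
    have := M.card_le_rank hbi (Finset.insert_subset hbW hDW)
    rw [Finset.card_insert_of_notMem hbD] at this
    omega
  have hbT : b ∈ T := (Finset.mem_union.mp (hET hbE)).resolve_left hbW
  have hbZ : b ∉ Z := fun h => hbW (hZW h)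
  have h1 : M.Indep (insert b Z) := M.subset_indep hbi (Finset.insert_subset_insert _ hZD)
  have h2 := M.card_le_rank h1 (Finset.insert_subset hbT hZT)
  rw [Finset.card_insert_of_notMem hbZ] at h2
  omega

lemma rank_union_le_of_forall {T U W : Finset α} (hT : M.Indep T) (hTW : T ⊆ W)
    (hU : ∀ y ∈ U, M.rank (insert y T) ≤ T.card) : M.rank (W ∪ U) ≤ M.rank W := by
  induction U using Finset.induction with
  | empty => simp
  | @insert y U hyU ih =>
    have h1 : W ∪ insert y U ⊆ (W ∪ U) ∪ insert y T := by
      intro x hx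
      rcases Finset.mem_union.mp hx with hx | hx
      · exact Finset.mem_union_left _ (Finset.mem_union_left _ hx)
      · rcases Finset.mem_insert.mp hx with rfl | hx
        · exact Finset.mem_union_right _ (Finset.mem_insert_self _ _)
        · exact Finset.mem_union_left _ (Finset.mem_union_right _ hx)
    calc M.rank (W ∪ insert y U) ≤ M.rank ((W ∪ U) ∪ insert y T) := M.rank_mono h1
      _ ≤ M.rank (W ∪ U) := M.rank_union_le hT (Finset.subset_insert _ _)
          (hU y (Finset.mem_insert_self _ _)) (hTW.trans Finset.subset_union_left)
      _ ≤ M.rank W := ih fun y hy => hU y (Finset.mem_insert_of_mem hy)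

lemma rank_insert_le_of_noedge {S A : Finset α} (hS : M.Indep S) (hA : A ⊆ S)
    (hAne : A.Nonempty) {y : α} (hy : y ∉ S)
    (hno : ∀ x ∈ A, ¬ M.Indep (insert y (S.erase x))) :
    M.rank (insert y (S \ A)) ≤ (S \ A).card := by
  by_contra h
  push_neg at h
  have hyA : y ∉ S \ A := fun hy' => hy (Finset.mem_sdiff.mp hy').1
  have hcard : (insert y (S \ A)).card = (S \ A).card + 1 :=
    Finset.card_insert_of_notMem hyA
  have hind : M.Indep (insert y (S \ A)) := by
    refine M.indep_of_rank_eq_card ?_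
    have := M.rank_le_card (insert y (S \ A))
    omega
  have hsd : (S \ A).card = S.card - A.card := Finset.card_sdiff_of_subset hA
  have h2 : 1 ≤ A.card := Finset.card_pos.mpr hAne
  have h3 : A.card ≤ S.card := Finset.card_le_card hA
  obtain ⟨D, hD1, hD2, hDi, hDc⟩ := M.exists_superset hind hS (by omega)
  have hDsub : D ⊆ insert y S := hD2.trans (by
    intro x hx
    rcases Finset.mem_union.mp hx with hx | hx
    · rcases Finset.mem_insert.mp hx with rfl | hx
      · exact Finset.mem_insert_self _ _
      · exact Finset.mem_insert_of_mem (Finset.mem_sdiff.mp hx).1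
    · exact Finset.mem_insert_of_mem hx)
  have hmiss : ((insert y S) \ D).card = 1 := by
    rw [Finset.card_sdiff_of_subset hDsub, Finset.card_insert_of_notMem hy]
    omega
  obtain ⟨x, hx⟩ := Finset.card_eq_one.mp hmiss
  have hxS : x ∈ insert y S ∧ x ∉ D := Finset.mem_sdiff.mp (hx ▸ Finset.mem_singleton_self x)
  have hyD : y ∈ D := hD1 (Finset.mem_insert_self _ _)
  have hxy : x ≠ y := fun h => hxS.2 (h ▸ hyD)
  have hxS' : x ∈ S := (Finset.mem_insert.mp hxS.1).resolve_left hxy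
  have hxA : x ∈ A := by
    by_contra hxA
    exact hxS.2 (hD1 (Finset.mem_insert_of_mem (Finset.mem_sdiff.mpr ⟨hxS', hxA⟩)))
  have hDeq : D = insert y (S.erase x) := by
    apply Finset.eq_of_subset_of_card_le
    · intro z hz
      rcases Finset.mem_insert.mp (hDsub hz) with rfl | hzS
      · exact Finset.mem_insert_self _ _
      · refine Finset.mem_insert_of_mem (Finset.mem_erase.mpr ⟨?_, hzS⟩)
        rintro rfl; exact hxS.2 hz
    · rw [Finset.card_insert_of_notMem (fun h => hy (Finset.mem_of_mem_erase h)),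
        Finset.card_erase_of_mem hxS']
      omega
  exact hno x hxA (hDeq ▸ hDi)

lemma peel {S X₁ X₂ Y₁ Y₂ : Finset α} (hS : M.Indep S)
    (hX₁ : X₁ ⊆ S) (hX₂ : X₂ ⊆ S) (hXd : Disjoint X₁ X₂)
    (hY₁ : Disjoint Y₁ S) (hY₂ : Disjoint Y₂ S) (hYd : Disjoint Y₁ Y₂)
    (hc₁ : X₁.card = Y₁.card) (hc₂ : X₂.card = Y₂.card)
    (hno : ∀ x ∈ X₁, ∀ y ∈ Y₂, ¬ M.Indep (insert y (S.erase x)))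
    (hbig : M.Indep ((S \ (X₁ ∪ X₂)) ∪ (Y₁ ∪ Y₂))) :
    M.Indep ((S \ X₁) ∪ Y₁) := by
  rcases X₁.eq_empty_or_nonempty with h1 | h1
  · have hY1e : Y₁ = ∅ := Finset.card_eq_zero.mp (by rw [← hc₁, h1]; simp)
    rw [h1, hY1e]
    simpa using hS
  · have hS₁ : M.Indep (S \ X₁) := M.subset_indep hS Finset.sdiff_subset
    have hspan : ∀ y ∈ Y₂, M.rank (insert y (S \ X₁)) ≤ (S \ X₁).card := fun y hy =>
      M.rank_insert_le_of_noedge hS hX₁ h1 (Finset.disjoint_left.mp hY₂ hy)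
        (fun x hx => hno x hx y hy)
    have hkey : M.rank (((S \ X₁) ∪ Y₁) ∪ Y₂) ≤ M.rank ((S \ X₁) ∪ Y₁) :=
      M.rank_union_le_of_forall hS₁ Finset.subset_union_left hspan
    have hsub : (S \ (X₁ ∪ X₂)) ∪ (Y₁ ∪ Y₂) ⊆ ((S \ X₁) ∪ Y₁) ∪ Y₂ := by
      intro z hz
      rcases Finset.mem_union.mp hz with hz | hz
      · rw [Finset.mem_sdiff] at hz
        exact Finset.mem_union_left _ (Finset.mem_union_left _
          (Finset.mem_sdiff.mpr ⟨hz.1, fun h => hz.2 (Finset.mem_union_left _ h)⟩))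
      · rcases Finset.mem_union.mp hz with hz | hz
        · exact Finset.mem_union_left _ (Finset.mem_union_right _ hz)
        · exact Finset.mem_union_right _ hz
    have hbigle := M.card_le_rank hbig hsub
    have e1 : ((S \ (X₁ ∪ X₂)) ∪ (Y₁ ∪ Y₂)).card = (S \ (X₁ ∪ X₂)).card + (Y₁ ∪ Y₂).card := by
      apply Finset.card_union_of_disjoint
      apply Finset.disjoint_union_right.mpr
      exact ⟨hY₁.symm.mono_left Finset.sdiff_subset, hY₂.symm.mono_left Finset.sdiff_subset⟩
    have e2 : (S \ (X₁ ∪ X₂)).card = S.card - (X₁ ∪ X₂).card :=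
      Finset.card_sdiff_of_subset (Finset.union_subset hX₁ hX₂)
    have e3 : (X₁ ∪ X₂).card = X₁.card + X₂.card := Finset.card_union_of_disjoint hXd
    have e4 : (Y₁ ∪ Y₂).card = Y₁.card + Y₂.card := Finset.card_union_of_disjoint hYd
    have e5 : ((S \ X₁) ∪ Y₁).card = (S \ X₁).card + Y₁.card :=
      Finset.card_union_of_disjoint (hY₁.symm.mono_left Finset.sdiff_subset)
    have e6 : (S \ X₁).card = S.card - X₁.card := Finset.card_sdiff_of_subset hX₁
    have e7 : (X₁ ∪ X₂).card ≤ S.card := Finset.card_le_card (Finset.union_subset hX₁ hX₂)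
    have e8 : X₁.card ≤ S.card := Finset.card_le_card hX₁
    apply M.indep_of_rank_eq_card
    have := M.rank_le_card ((S \ X₁) ∪ Y₁)
    omega

lemma core {S X₁ X₂ Y₁ Y₂ : Finset α} (hS : M.Indep S)
    (hX₁ : X₁ ⊆ S) (hX₂ : X₂ ⊆ S) (hXd : Disjoint X₁ X₂)
    (hY₁ : Disjoint Y₁ S) (hY₂ : Disjoint Y₂ S) (hYd : Disjoint Y₁ Y₂)
    (hc₁ : X₁.card = Y₁.card) (hc₂ : X₂.card = Y₂.card)
    (hno : ∀ x ∈ X₁, ∀ y ∈ Y₂, ¬ M.Indep (insert y (S.erase x)))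
    (hbig : M.Indep ((S \ (X₁ ∪ X₂)) ∪ (Y₁ ∪ Y₂))) :
    M.Indep ((S \ X₂) ∪ Y₂) := by
  rcases X₁.eq_empty_or_nonempty with h1 | h1
  · have hY1e : Y₁ = ∅ := Finset.card_eq_zero.mp (by rw [← hc₁, h1]; simp)
    rw [h1, hY1e] at hbig
    simpa using hbig
  · have hS₁ : M.Indep (S \ X₁) := M.subset_indep hS Finset.sdiff_subset
    have hspan : ∀ y ∈ Y₂, M.rank (insert y (S \ X₁)) ≤ (S \ X₁).card := fun y hy =>
      M.rank_insert_le_of_noedge hS hX₁ h1 (Finset.disjoint_left.mp hY₂ hy)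
        (fun x hx => hno x hx y hy)
    have hrank1 : M.rank ((S \ X₁) ∪ Y₂) ≤ (S \ X₁).card := by
      have h := M.rank_union_le_of_forall hS₁ subset_rfl hspan
      have := M.rank_le_card (S \ X₁)
      omega
    have hZ : M.Indep ((S \ (X₁ ∪ X₂)) ∪ Y₂) :=
      M.subset_indep hbig (Finset.union_subset_union subset_rfl Finset.subset_union_right)
    have hZsub : (S \ (X₁ ∪ X₂)) ∪ Y₂ ⊆ (S \ X₁) ∪ Y₂ :=
      Finset.union_subset_union (Finset.sdiff_subset_sdiff subset_rfl Finset.subset_union_left)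
        subset_rfl
    have e2 : (S \ (X₁ ∪ X₂)).card = S.card - (X₁ ∪ X₂).card :=
      Finset.card_sdiff_of_subset (Finset.union_subset hX₁ hX₂)
    have e3 : (X₁ ∪ X₂).card = X₁.card + X₂.card := Finset.card_union_of_disjoint hXd
    have e6 : (S \ X₁).card = S.card - X₁.card := Finset.card_sdiff_of_subset hX₁
    have e7 : (X₁ ∪ X₂).card ≤ S.card := Finset.card_le_card (Finset.union_subset hX₁ hX₂)
    have e8 : X₁.card ≤ S.card := Finset.card_le_card hX₁
    have e9 : ((S \ (X₁ ∪ X₂)) ∪ Y₂).card = (S \ (X₁ ∪ X₂)).card + Y₂.card :=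
      Finset.card_union_of_disjoint (hY₂.symm.mono_left Finset.sdiff_subset)
    have hZR : (S \ (X₁ ∪ X₂)) ∪ Y₂ ⊆ (S \ X₂) ∪ Y₂ :=
      Finset.union_subset_union (Finset.sdiff_subset_sdiff subset_rfl Finset.subset_union_right)
        subset_rfl
    have hL4 : M.rank (((S \ X₂) ∪ Y₂) ∪ ((S \ X₁) ∪ Y₂)) ≤ M.rank ((S \ X₂) ∪ Y₂) :=
      M.rank_union_le hZ hZsub (by omega) hZR
    have hSsub : S ⊆ ((S \ X₂) ∪ Y₂) ∪ ((S \ X₁) ∪ Y₂) := by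
      intro z hz
      by_cases hz2 : z ∈ X₂
      · have hz1 : z ∉ X₁ := Finset.disjoint_right.mp hXd hz2
        exact Finset.mem_union_right _ (Finset.mem_union_left _ (Finset.mem_sdiff.mpr ⟨hz, hz1⟩))
      · exact Finset.mem_union_left _ (Finset.mem_union_left _ (Finset.mem_sdiff.mpr ⟨hz, hz2⟩))
    have hrS : S.card ≤ M.rank (((S \ X₂) ∪ Y₂) ∪ ((S \ X₁) ∪ Y₂)) := M.card_le_rank hS hSsub
    have e10 : ((S \ X₂) ∪ Y₂).card = (S \ X₂).card + Y₂.card :=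
      Finset.card_union_of_disjoint (hY₂.symm.mono_left Finset.sdiff_subset)
    have e11 : (S \ X₂).card = S.card - X₂.card := Finset.card_sdiff_of_subset hX₂
    have e12 : X₂.card ≤ S.card := Finset.card_le_card hX₂
    apply M.indep_of_rank_eq_card
    have := M.rank_le_card ((S \ X₂) ∪ Y₂)
    omega

end FinMatroid

/-- If `X₁, …, X_k ⊆ S` are disjoint and `Y₁, …, Y_k ⊆ V \ S` are disjoint with `|Xᵢ| = |Yᵢ|`,
there is no exchange edge from `Xᵢ` to `Yⱼ` for `i < j` (i.e. `S − x + y ∉ I` for `x ∈ Xᵢ`,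
`y ∈ Yⱼ`), and `S − X₁ + Y₁ − ⋯ − X_k + Y_k ∈ I`, then each `S − Xᵢ + Yᵢ ∈ I`. -/
theorem converse_augset (M : FinMatroid α) (S : Finset α) (k : ℕ)
    (X Y : ℕ → Finset α)
    (hS : M.Indep S)
    (hXS : ∀ i ∈ Finset.Icc 1 k, X i ⊆ S)
    (hYS : ∀ i ∈ Finset.Icc 1 k, Disjoint (Y i) S)
    (hXdisj : ∀ i ∈ Finset.Icc 1 k, ∀ j ∈ Finset.Icc 1 k, i ≠ j → Disjoint (X i) (X j))
    (hYdisj : ∀ i ∈ Finset.Icc 1 k, ∀ j ∈ Finset.Icc 1 k, i ≠ j → Disjoint (Y i) (Y j))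
    (hcard : ∀ i ∈ Finset.Icc 1 k, (X i).card = (Y i).card)
    (hnoedge : ∀ i ∈ Finset.Icc 1 k, ∀ j ∈ Finset.Icc 1 k, i < j →
      ∀ x ∈ X i, ∀ y ∈ Y j, ¬ M.Indep (insert y (S.erase x)))
    (hbig : M.Indep ((S \ (Finset.Icc 1 k).biUnion X) ∪ (Finset.Icc 1 k).biUnion Y)) :
    ∀ i ∈ Finset.Icc 1 k, M.Indep ((S \ X i) ∪ Y i) := by
  have hIcc : ∀ m : ℕ, Finset.Icc 1 (m + 1) = insert (m + 1) (Finset.Icc 1 m) := by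
    intro m; ext a; simp only [Finset.mem_Icc, Finset.mem_insert]; omega
  have hsub : ∀ m, m ≤ k → Finset.Icc 1 m ⊆ Finset.Icc 1 k := fun m hm =>
    Finset.Icc_subset_Icc_right hm
  have hmem : ∀ m, 1 ≤ m → m ≤ k → m ∈ Finset.Icc 1 k := fun m h1 h2 =>
    Finset.mem_Icc.mpr ⟨h1, h2⟩
  have hBXS : ∀ m, m ≤ k → (Finset.Icc 1 m).biUnion X ⊆ S := fun m hm =>
    Finset.biUnion_subset.mpr fun j hj => hXS j (hsub m hm hj)
  have hBYS : ∀ m, m ≤ k → Disjoint ((Finset.Icc 1 m).biUnion Y) S := fun m hm =>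
    (Finset.disjoint_biUnion_left _ _ _).mpr fun j hj => hYS j (hsub m hm hj)
  have hBXd : ∀ m, m + 1 ≤ k → Disjoint ((Finset.Icc 1 m).biUnion X) (X (m + 1)) := by
    intro m hm
    refine (Finset.disjoint_biUnion_left _ _ _).mpr fun j hj => ?_
    have hj' := Finset.mem_Icc.mp hj
    exact hXdisj j (hsub m (by omega) hj) (m + 1) (hmem _ (by omega) hm) (by omega)
  have hBYd : ∀ m, m + 1 ≤ k → Disjoint ((Finset.Icc 1 m).biUnion Y) (Y (m + 1)) := by
    intro m hm
    refine (Finset.disjoint_biUnion_left _ _ _).mpr fun j hj => ?_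
    have hj' := Finset.mem_Icc.mp hj
    exact hYdisj j (hsub m (by omega) hj) (m + 1) (hmem _ (by omega) hm) (by omega)
  have hBcard : ∀ m, m ≤ k →
      ((Finset.Icc 1 m).biUnion X).card = ((Finset.Icc 1 m).biUnion Y).card := by
    intro m hm
    rw [Finset.card_biUnion
        (fun a ha b hb hab => hXdisj a (hsub m hm ha) b (hsub m hm hb) hab),
      Finset.card_biUnion
        (fun a ha b hb hab => hYdisj a (hsub m hm ha) b (hsub m hm hb) hab)]
    exact Finset.sum_congr rfl fun j hj => hcard j (hsub m hm hj)
  have hBno : ∀ m, m + 1 ≤ k → ∀ x ∈ (Finset.Icc 1 m).biUnion X, ∀ y ∈ Y (m + 1),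
      ¬ M.Indep (insert y (S.erase x)) := by
    intro m hm x hx y hy
    obtain ⟨j, hj, hxj⟩ := Finset.mem_biUnion.mp hx
    have hj' := Finset.mem_Icc.mp hj
    exact hnoedge j (hsub m (by omega) hj) (m + 1) (hmem _ (by omega) hm) (by omega) x hxj y hy
  have key : ∀ d m, m + d = k →
      M.Indep ((S \ (Finset.Icc 1 m).biUnion X) ∪ (Finset.Icc 1 m).biUnion Y) := by
    intro d
    induction d with
    | zero =>
      intro m hm
      obtain rfl : m = k := by omega
      exact hbig
    | succ d ih =>
      intro m hm
      have hP := ih (m + 1) (by omega)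
      rw [hIcc m, Finset.biUnion_insert, Finset.biUnion_insert,
        Finset.union_comm (X (m + 1)), Finset.union_comm (Y (m + 1))] at hP
      exact M.peel hS (hBXS m (by omega)) (hXS (m + 1) (hmem _ (by omega) (by omega)))
        (hBXd m (by omega)) (hBYS m (by omega)) (hYS (m + 1) (hmem _ (by omega) (by omega)))
        (hBYd m (by omega)) (hBcard m (by omega)) (hcard (m + 1) (hmem _ (by omega) (by omega)))
        (hBno m (by omega)) hP
  intro i hi
  have hi' := Finset.mem_Icc.mp hi
  obtain ⟨j, rfl⟩ : ∃ j, i = j + 1 := ⟨i - 1, by omega⟩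
  have hPi := key (k - (j + 1)) (j + 1) (by omega)
  rw [hIcc j, Finset.biUnion_insert, Finset.biUnion_insert,
    Finset.union_comm (X (j + 1)), Finset.union_comm (Y (j + 1))] at hPi
  exact M.core hS (hBXS j (by omega)) (hXS (j + 1) hi) (hBXd j (by omega))
    (hBYS j (by omega)) (hYS (j + 1) hi) (hBYd j (by omega)) (hBcard j (by omega))
    (hcard (j + 1) hi) (hBno j (by omega)) hPi
end
end

section
/- Let K ⊆ ℝⁿ be a compact convex set and f : K → ℝ convex, and suppose there is C_f such that f(u + γ(v−u)) ≤ f(u) + ⟨∇f(u), γ(v−u)⟩ + γ²C_f/2 for all u, v ∈ K and γ ∈ [0,1]. Then the Frank–Wolfe iteration x_{k+1} = x_k + γ_k(z_k − x_k), where z_k ∈ argmin_{z∈K} ⟨∇f(x_k), z⟩ and γ_k = 2/(k+2), satisfies f(x_k) ≤ min_{x∈K} f(x) + 2C_f/(k+2) for all k ≥ 1. -/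
open scoped RealInnerProductSpace

/-!
Convexity bounds the linearization from below, `⟪∇f(xₖ), y - xₖ⟫ ≤ f y - f xₖ`, and `zₖ`
minimizes that linearization over `K`. Plugging `v = zₖ` into the curvature bound therefore gives
the recursion `hₖ₊₁ ≤ (1 - γₖ) hₖ + γₖ² C_f / 2` for the gap `hₖ = f xₖ - f y`, and with
`γₖ = 2 / (k + 2)` an induction yields `hₖ ≤ 2 C_f / (k + 2)`, because `(c - 1)(c + 1) ≤ c²`.
-/

theorem Convex.mem_of_add_smul_sub_recurrence {𝕜 E : Type*} [Ring 𝕜] [PartialOrder 𝕜]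
    [IsOrderedRing 𝕜] [AddCommGroup E] [Module 𝕜 E] {K : Set E} {x z : ℕ → E} {γ : ℕ → 𝕜}
    (hK : Convex 𝕜 K) (hx0 : x 0 ∈ K) (hzK : ∀ k, z k ∈ K) (hγ : ∀ k, γ k ∈ Set.Icc 0 1)
    (hstep : ∀ k, x (k + 1) = x k + γ k • (z k - x k)) (k : ℕ) : x k ∈ K := by
  induction k with
  | zero => exact hx0
  | succ k ih => exact hstep k ▸ hK.add_smul_sub_mem ih (hzK k) (hγ k)

section FirstOrderCondition

variable {E : Type*} [NormedAddCommGroup E] {s : Set E} {f : E → ℝ} {u y : E}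

theorem ConvexOn.apply_sub_le_of_hasFDerivAt [NormedSpace ℝ E] (hf : ConvexOn ℝ s f)
    {f' : E →L[ℝ] ℝ} (hu : u ∈ s) (hy : y ∈ s) (hf' : HasFDerivAt f f' u) :
    f' (y - u) ≤ f y - f u := by
  have hline : ConvexOn ℝ (Set.Icc 0 1) (f ∘ AffineMap.lineMap (k := ℝ) u y) :=
    (hf.comp_affineMap _).subset (fun _ ht => hf.1.lineMap_mem hu hy ht) (convex_Icc 0 1)
  have hderiv : HasDerivAt (f ∘ AffineMap.lineMap (k := ℝ) u y) (f' (y - u)) 0 := by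
    refine HasFDerivAt.comp_hasDerivAt (0 : ℝ) ?_ AffineMap.hasDerivAt_lineMap
    simpa using hf'
  simpa [slope_def_field] using hline.le_slope_of_hasDerivAt
    (Set.left_mem_Icc.2 zero_le_one) (Set.right_mem_Icc.2 zero_le_one) zero_lt_one hderiv

theorem ConvexOn.inner_gradient_sub_le [InnerProductSpace ℝ E] [CompleteSpace E]
    (hf : ConvexOn ℝ s f) (hu : u ∈ s) (hy : y ∈ s) (hd : DifferentiableAt ℝ f u) :
    ⟪gradient f u, y - u⟫ ≤ f y - f u := by
  simpa using hf.apply_sub_le_of_hasFDerivAt hu hy hd.hasFDerivAt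

end FirstOrderCondition

section FrankWolfe

variable {E : Type*} [NormedAddCommGroup E] [InnerProductSpace ℝ E] [CompleteSpace E]
  {K : Set E} {f : E → ℝ} {C : ℝ}

theorem curvature_const_nonneg {u : E} (hu : u ∈ K)
    (hcurv : ∀ v ∈ K, ∀ γ ∈ Set.Icc (0 : ℝ) 1,
      f (u + γ • (v - u)) ≤ f u + ⟪gradient f u, γ • (v - u)⟫ + γ ^ 2 * C / 2) :
    0 ≤ C := by
  have := hcurv u hu 1 (Set.right_mem_Icc.2 zero_le_one)
  simp only [sub_self, smul_zero, add_zero, inner_zero_right, one_pow, one_mul] at this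
  linarith

theorem frankWolfe_gap_step_le {u z y : E} {γ : ℝ} (hf : ConvexOn ℝ K f)
    (hu : u ∈ K) (hy : y ∈ K) (hd : DifferentiableAt ℝ f u)
    (hzmin : ⟪gradient f u, z⟫ ≤ ⟪gradient f u, y⟫) (hγ : γ ∈ Set.Icc 0 1)
    (hcurv : f (u + γ • (z - u)) ≤ f u + ⟪gradient f u, γ • (z - u)⟫ + γ ^ 2 * C / 2) :
    f (u + γ • (z - u)) - f y ≤ (1 - γ) * (f u - f y) + γ ^ 2 * C / 2 := by
  have hlin : ⟪gradient f u, z - u⟫ ≤ f y - f u :=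
    calc ⟪gradient f u, z - u⟫ ≤ ⟪gradient f u, y - u⟫ := by
          simpa only [inner_sub_right] using sub_le_sub_right hzmin _
      _ ≤ f y - f u := hf.inner_gradient_sub_le hu hy hd
  rw [real_inner_smul_right] at hcurv
  nlinarith [mul_le_mul_of_nonneg_left hlin hγ.1]

end FrankWolfe

theorem le_two_mul_div_of_le_one_sub_mul_add_sq {h : ℕ → ℝ} {C : ℝ} (hC : 0 ≤ C)
    (hrec : ∀ k : ℕ, h (k + 1) ≤ (1 - 2 / ((k : ℝ) + 2)) * h k + (2 / ((k : ℝ) + 2)) ^ 2 * C / 2)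
    {k : ℕ} (hk : 1 ≤ k) : h k ≤ 2 * C / ((k : ℝ) + 2) := by
  induction k, hk using Nat.le_induction with
  | base =>
    have := hrec 0
    norm_num at this ⊢
    linarith
  | succ k hk ih =>
    set c : ℝ := (k : ℝ) + 2 with hc
    have hc2 : 2 ≤ c := by simp [hc]
    have hcoef : 0 ≤ 1 - 2 / c := by
      rw [sub_nonneg, div_le_one (by linarith)]
      exact hc2
    have hbound : (1 - 2 / c) * (2 * C / c) + (2 / c) ^ 2 * C / 2 ≤ 2 * C / (c + 1) := by
      have hc0 : c ≠ 0 := by positivity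
      rw [show (1 - 2 / c) * (2 * C / c) + (2 / c) ^ 2 * C / 2 = 2 * C * (c - 1) / c ^ 2 by
        field_simp; ring, div_le_div_iff₀ (by positivity) (by positivity)]
      nlinarith
    calc h (k + 1) ≤ (1 - 2 / c) * h k + (2 / c) ^ 2 * C / 2 := hrec k
      _ ≤ (1 - 2 / c) * (2 * C / c) + (2 / c) ^ 2 * C / 2 := by gcongr
      _ ≤ 2 * C / (c + 1) := hbound
      _ = 2 * C / (((k + 1 : ℕ) : ℝ) + 2) := by rw [hc]; push_cast; ring_nf

theorem frank_wolfe_general {n : ℕ} (K : Set (EuclideanSpace ℝ (Fin n)))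
    (f : EuclideanSpace ℝ (Fin n) → ℝ) (Cf : ℝ)
    (hKconv : Convex ℝ K)
    (hfconv : ConvexOn ℝ K f)
    (hdiff : ∀ u ∈ K, DifferentiableAt ℝ f u)
    (hcurv : ∀ u ∈ K, ∀ v ∈ K, ∀ γ ∈ Set.Icc (0 : ℝ) 1,
      f (u + γ • (v - u)) ≤ f u + ⟪gradient f u, γ • (v - u)⟫ + γ ^ 2 * Cf / 2)
    (x z : ℕ → EuclideanSpace ℝ (Fin n))
    (hx0 : x 0 ∈ K)
    (hzK : ∀ k, z k ∈ K)
    (hzmin : ∀ k, ∀ y ∈ K, ⟪gradient f (x k), z k⟫ ≤ ⟪gradient f (x k), y⟫)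
    (hstep : ∀ k : ℕ, x (k + 1) = x k + (2 / ((k : ℝ) + 2)) • (z k - x k)) :
    ∀ k : ℕ, 1 ≤ k → ∀ y ∈ K, f (x k) ≤ f y + 2 * Cf / ((k : ℝ) + 2) := by
  have hγ : ∀ k : ℕ, 2 / ((k : ℝ) + 2) ∈ Set.Icc (0 : ℝ) 1 := fun k =>
    ⟨by positivity, (div_le_one (by positivity)).2 (by simp)⟩
  have hxK := hKconv.mem_of_add_smul_sub_recurrence hx0 hzK hγ hstep
  intro k hk y hy
  suffices f (x k) - f y ≤ 2 * Cf / ((k : ℝ) + 2) by linarith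
  refine le_two_mul_div_of_le_one_sub_mul_add_sq (h := fun m => f (x m) - f y)
    (curvature_const_nonneg hx0 (hcurv _ hx0)) (fun m => ?_) hk
  rw [hstep m]
  exact frankWolfe_gap_step_le hfconv (hxK m) hy (hdiff _ (hxK m)) (hzmin m y hy) (hγ m)
    (hcurv _ (hxK m) _ (hzK m) _ (hγ m))

/-- Frank–Wolfe convergence: on a compact convex `K ⊆ ℝⁿ`, for a differentiable convex `f`
with curvature constant `C_f`, the iteration `x_{k+1} = x_k + γ_k (z_k − x_k)` with
`z_k ∈ argmin_{z ∈ K} ⟨∇f(x_k), z⟩` and `γ_k = 2/(k+2)` satisfies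
`f(x_k) ≤ min_{x ∈ K} f + 2 C_f/(k+2)` for all `k ≥ 1`. -/
theorem frank_wolfe {n : ℕ} (K : Set (EuclideanSpace ℝ (Fin n)))
    (f : EuclideanSpace ℝ (Fin n) → ℝ) (Cf : ℝ)
    (hKcomp : IsCompact K) (hKconv : Convex ℝ K)
    (hfconv : ConvexOn ℝ K f)
    (hdiff : ∀ u ∈ K, DifferentiableAt ℝ f u)
    (hcurv : ∀ u ∈ K, ∀ v ∈ K, ∀ γ ∈ Set.Icc (0 : ℝ) 1,
      f (u + γ • (v - u)) ≤ f u + ⟪gradient f u, γ • (v - u)⟫ + γ ^ 2 * Cf / 2)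
    (x z : ℕ → EuclideanSpace ℝ (Fin n))
    (hx0 : x 0 ∈ K)
    (hzK : ∀ k, z k ∈ K)
    (hzmin : ∀ k, ∀ y ∈ K, ⟪gradient f (x k), z k⟫ ≤ ⟪gradient f (x k), y⟫)
    (hstep : ∀ k : ℕ, x (k + 1) = x k + (2 / ((k : ℝ) + 2)) • (z k - x k)) :
    ∀ k : ℕ, 1 ≤ k → ∀ y ∈ K, f (x k) ≤ f y + 2 * Cf / ((k : ℝ) + 2) :=
  frank_wolfe_general K f Cf hKconv hfconv hdiff hcurv x z hx0 hzK hzmin hstep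
end
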